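/- arXiv:2009.09061 — 5 statements merged into one kernel-verified Lean document; each statement's English description precedes it below -/
import Mathlib

section
/- For every n ≥ 1, the number of Dyck paths of semilength n that have no peak at any height in {2r+3 : r ≥ 0} (i.e., no peak at an odd height ≥ 3) and have no up-run of length greater than 2 equals 2^(n−1); for n = 0 there is exactly 1 such path. -/
/-- The height of a path (list of up/down steps, `true` = up = +1, `false` = down = −1)
after its first `k` steps. -/
def heightAt (p : List Bool) (k : ℕ) : ℤ :=
  ((p.take k).count true : ℤ) - ((p.take k).count false : ℤ)

/-- A Dyck path: all partial sums nonnegative and total sum zero. -/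
def IsDyck (p : List Bool) : Prop :=
  (∀ k, 0 ≤ heightAt p k) ∧ heightAt p p.length = 0

/-- A peak at height `h`: an up-step immediately followed by a down-step,
the height after the up-step being `h`. -/
def HasPeakAt (p : List Bool) (h : ℤ) : Prop :=
  ∃ i, p[i]? = some true ∧ p[i+1]? = some false ∧ heightAt p (i+1) = h

/-- A valley at height `h`: a down-step immediately followed by an up-step,
the height after the down-step being `h`. -/
def HasValleyAt (p : List Bool) (h : ℤ) : Prop :=
  ∃ i, p[i]? = some false ∧ p[i+1]? = some true ∧ heightAt p (i+1) = h

/-- `p` has an up-run of length `m`: a maximal block of exactly `m` consecutive up-steps. -/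
def HasUpRun (p : List Bool) (m : ℕ) : Prop :=
  ∃ i, (∀ j, j < m → p[i+j]? = some true) ∧
    (i = 0 ∨ p[i-1]? = some false) ∧
    (p[i+m]? = some false ∨ i + m = p.length)

/-- `p` has a down-run of length `m`: a maximal block of exactly `m` consecutive down-steps. -/
def HasDownRun (p : List Bool) (m : ℕ) : Prop :=
  ∃ i, (∀ j, j < m → p[i+j]? = some false) ∧
    (i = 0 ∨ p[i-1]? = some true) ∧
    (p[i+m]? = some true ∨ i + m = p.length)

/-- Generating function of the set of Dyck paths satisfying `Q`:
the coefficient of `z^n` is the number of such paths of semilength `n`. -/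
noncomputable def genFun (Q : List Bool → Prop) : PowerSeries ℕ :=
  PowerSeries.mk fun n => Set.ncard {p : List Bool | p.length = 2 * n ∧ IsDyck p ∧ Q p}

lemma heightAt_zero (p : List Bool) : heightAt p 0 = 0 := by simp [heightAt]

lemma heightAt_succ (p : List Bool) (k : ℕ) (b : Bool) (hb : p[k]? = some b) :
    heightAt p (k+1) = heightAt p k + (if b then 1 else -1) := by
  simp [heightAt, List.take_succ, hb]
  cases b <;> simp <;> ring

lemma heightAt_of_le (p : List Bool) (k : ℕ) (h : p.length ≤ k) :
    heightAt p k = heightAt p p.length := by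
  simp [heightAt, List.take_of_length_le h, List.take_length]

lemma heightAt_cons (a : Bool) (p : List Bool) (k : ℕ) :
    heightAt (a :: p) (k+1) = (if a then 1 else -1) + heightAt p k := by
  simp [heightAt, List.take_succ_cons]
  cases a <;> simp <;> ring

lemma run_exists (p : List Bool) : ∀ a : ℕ, p[a]? = some true →
    ∃ i m, i ≤ a ∧ a < i + m ∧ (∀ j, j < m → p[i+j]? = some true) ∧
      (i = 0 ∨ p[i-1]? = some false) ∧
      (p[i+m]? = some false ∨ i + m = p.length) := by
  intro a
  induction a using Nat.strong_induction_on with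
  | _ a ih =>
  intro ha
  by_cases hstart : a = 0 ∨ p[a-1]? = some false
  · -- run starts at a; find forward end
    have hex : ∃ j, ¬ p[a+j]? = some true := by
      refine ⟨p.length, ?_⟩
      have : p.length ≤ a + p.length := Nat.le_add_left _ _
      simp [List.getElem?_eq_none this]
    classical
    let m := Nat.find hex
    have hm : ¬ p[a+m]? = some true := Nat.find_spec hex
    have hlt : ∀ j, j < m → p[a+j]? = some true := fun j hj => by
      have := Nat.find_min hex hj
      simpa using this
    have hm1 : 1 ≤ m := by
      rcases Nat.eq_zero_or_pos m with h0 | h; · exfalso; apply hm; simpa [h0] using ha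
      exact h
    refine ⟨a, m, le_refl a, by omega, hlt, hstart, ?_⟩
    rcases h : p[a+m]? with _ | b
    · right
      have hge : p.length ≤ a + m := by simpa using List.getElem?_eq_none_iff.mp h
      have hle : a + m ≤ p.length := by
        have := hlt (m-1) (by omega)
        have : a + (m-1) < p.length := by
          by_contra hc
          simp [List.getElem?_eq_none (by omega : p.length ≤ a + (m-1))] at this
        omega
      omega
    · left
      cases b
      · rfl
      · exact absurd h hm
  · push_neg at hstart
    obtain ⟨ha0, hprev⟩ := hstart
    have hprevT : p[a-1]? = some true := by
      rcases h : p[a-1]? with _ | b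
      · exfalso
        have : p.length ≤ a - 1 := by simpa using List.getElem?_eq_none_iff.mp h
        have : p.length ≤ a := by omega
        simp [List.getElem?_eq_none this] at ha
      · cases b
        · exact absurd h hprev
        · rfl
    obtain ⟨i, m, h1, h2, h3, h4, h5⟩ := ih (a-1) (by omega) hprevT
    refine ⟨i, m, by omega, ?_, h3, h4, h5⟩
    -- a < i + m : since a ≤ i + m (a-1 < i+m) and a ≠ i+m
    have haim : a ≤ i + m := by omega
    rcases Nat.lt_or_ge a (i+m) with h | h
    · exact h
    · exfalso
      have heq : a = i + m := by omega
      rcases h5 with h5 | h5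
      · rw [← heq] at h5; rw [ha] at h5; simp at h5
      · rw [← heq] at h5
        have : p.length ≤ a := le_of_eq h5.symm
        simp [List.getElem?_eq_none this] at ha




lemma heightAt_run (p : List Bool) (i m : ℕ) (h : ∀ j, j < m → p[i+j]? = some true) :
    ∀ j, j ≤ m → heightAt p (i+j) = heightAt p i + j := by
  intro j hj
  induction j with
  | zero => simp
  | succ j ihj =>
    have h1 := heightAt_succ p (i+j) true (h j (by omega))
    push_cast
    rw [show i + (j+1) = (i+j) + 1 from rfl, h1, ihj (by omega)]
    simp; ring

lemma height_le_two (p : List Bool) (hd : IsDyck p)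
    (hpeak : ∀ r : ℕ, ¬ HasPeakAt p (2 * (r : ℤ) + 3))
    (hrun : ∀ m : ℕ, 2 < m → ¬ HasUpRun p m) :
    ∀ k, heightAt p k ≤ 2 := by
  by_contra hc
  push_neg at hc
  have hex : ∃ k, 3 ≤ heightAt p k := by obtain ⟨k, hk⟩ := hc; exact ⟨k, by omega⟩
  classical
  let k := Nat.find hex
  have hk3 : 3 ≤ heightAt p k := Nat.find_spec hex
  have hmin : ∀ j, j < k → heightAt p j < 3 := fun j hj => by
    have := Nat.find_min hex hj; omega
  have hk0 : k ≠ 0 := fun h => by rw [h] at hk3; simp [heightAt_zero] at hk3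
  have hkle : k ≤ p.length := by
    by_contra hcc
    have := heightAt_of_le p k (by omega)
    have := hmin p.length (by omega)
    omega
  -- step from k-1 to k
  obtain ⟨b, hb⟩ : ∃ b, p[k-1]? = some b := by
    rcases h : p[k-1]? with _ | b
    · exfalso
      have : p.length ≤ k - 1 := by simpa using List.getElem?_eq_none_iff.mp h
      omega
    · exact ⟨b, rfl⟩
  have hstep := heightAt_succ p (k-1) b hb
  rw [show k - 1 + 1 = k by omega] at hstep
  have hprev := hmin (k-1) (by omega)
  have hbt : b = true := by
    cases b
    · simp at hstep; omega
    · rfl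
  subst hbt
  simp at hstep
  have hhk : heightAt p k = 3 := by omega
  have hhk1 : heightAt p (k-1) = 2 := by omega
  -- the maximal up-run containing k-1
  obtain ⟨i, m, hi1, hi2, hrunsteps, hstart, hend⟩ := run_exists p (k-1) hb
  have hm2 : m ≤ 2 := by
    by_contra hmm
    exact hrun m (by omega) ⟨i, hrunsteps, hstart, hend⟩
  have hkim : k ≤ i + m := by omega
  have hrh := heightAt_run p i m hrunsteps (k - i) (by omega)
  rw [show i + (k - i) = k by omega] at hrh
  have hki : 1 ≤ k - i := by omega
  have hhi : heightAt p i = 3 - (k - i : ℤ) := by omega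

  rcases hstart with h0 | hprevF
  · subst h0
    rw [heightAt_zero] at hhi
    have : (k : ℤ) - 0 ≤ 2 := by
      have : k - 0 ≤ m := by omega
      omega
    simp at hhi
    omega
  · have hstep2 := heightAt_succ p (i-1) false hprevF
    have hi0 : i ≠ 0 := by
      intro h; subst h
      have h00 := hrunsteps 0 (by omega)
      simp at h00 hprevF
      simp [h00] at hprevF
    rw [show i - 1 + 1 = i by omega] at hstep2
    simp at hstep2
    have hpm : heightAt p (i-1) < 3 := hmin (i-1) (by omega)
    have hki2 : k - i = 2 := by
      have hkm : (k - i : ℕ) ≤ m := by omega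
      have : ((k - i : ℕ) : ℤ) ≤ 2 := by exact_mod_cast le_trans hkm hm2
      omega
    have him : i + m = k := by omega
    rcases hend with hF | hL
    · rw [him] at hF
      exact hpeak 0 ⟨k-1, hb, by rw [show k-1+1 = k by omega]; exact hF, by
        rw [show k-1+1 = k by omega]; rw [hhk]; ring⟩
    · rw [him] at hL
      have h2 := hd.2
      rw [← hL] at h2
      omega

lemma no_bad_of_height_le_two (p : List Bool) (hd : IsDyck p)
    (hht : ∀ k, heightAt p k ≤ 2) :
    (∀ r : ℕ, ¬ HasPeakAt p (2 * (r : ℤ) + 3)) ∧ (∀ m : ℕ, 2 < m → ¬ HasUpRun p m) := by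
  constructor
  · rintro r ⟨i, hu, hdn, hh⟩
    have := hht (i+1)
    rw [hh] at this
    omega
  · rintro m hm ⟨i, hsteps, -, -⟩
    have h3 := heightAt_run p i m hsteps 3 (by omega)
    have h0 := hd.1 i
    have := hht (i+3)
    omega

/-- Build a low (height ≤ 2) Dyck path from the list of "is the height 2 at even
positions" bits. `cur` is whether the current height is 2 (`true`) or 0 (`false`). -/
def mkPath : Bool → List Bool → List Bool
  | cur, [] => [!cur, false]
  | cur, x :: xs => (!cur) :: x :: mkPath x xs

lemma mkPath_length (cur : Bool) (b : List Bool) :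
    (mkPath cur b).length = 2 * b.length + 2 := by
  induction b generalizing cur with
  | nil => simp [mkPath]
  | cons x xs ih => simp [mkPath, ih x]; ring

lemma mkPath_ne_nil (cur : Bool) (b : List Bool) : mkPath cur b ≠ [] := by
  cases b <;> simp [mkPath]

lemma mkPath_injective (b1 : List Bool) : ∀ b2 cur, mkPath cur b1 = mkPath cur b2 → b1 = b2 := by
  induction b1 with
  | nil =>
    intro b2 cur h
    cases b2 with
    | nil => rfl
    | cons y ys =>
      exfalso
      simp [mkPath] at h
      exact mkPath_ne_nil y ys h.2
  | cons x xs ih =>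
    intro b2 cur h
    cases b2 with
    | nil =>
      exfalso
      simp [mkPath] at h
      exact mkPath_ne_nil x xs h.2
    | cons y ys =>
      have h' : x = y ∧ mkPath x xs = mkPath y ys := by
        have : mkPath cur (x::xs) = (!cur) :: x :: mkPath x xs := rfl
        have h2 : mkPath cur (y::ys) = (!cur) :: y :: mkPath y ys := rfl
        rw [this, h2] at h
        simpa using h
      obtain ⟨hxy, hrest⟩ := h'
      subst hxy
      rw [ih ys x hrest]

def hOf (cur : Bool) : ℤ := if cur then 2 else 0

lemma mkPath_heights (b : List Bool) : ∀ cur,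
    (∀ k, 0 ≤ hOf cur + heightAt (mkPath cur b) k ∧ hOf cur + heightAt (mkPath cur b) k ≤ 2) ∧
    hOf cur + heightAt (mkPath cur b) (mkPath cur b).length = 0 := by
  induction b with
  | nil =>
    intro cur
    constructor
    · intro k
      match k with
      | 0 => simp [heightAt_zero]; cases cur <;> simp [hOf]
      | 1 => cases cur <;> simp [mkPath, heightAt_cons, heightAt_zero, hOf]
      | (n+2) =>
        have : (mkPath cur []).length ≤ n + 2 := by simp [mkPath_length]
        rw [heightAt_of_le _ _ this]
        cases cur <;> simp [mkPath, heightAt_cons, heightAt_zero, hOf, heightAt]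
    · cases cur <;> simp [mkPath, heightAt_cons, heightAt_zero, hOf, heightAt]
  | cons x xs ih =>
    intro cur
    have key : ∀ k, heightAt (mkPath cur (x :: xs)) (k + 2) =
        (hOf x - hOf cur) + heightAt (mkPath x xs) k := by
      intro k
      show heightAt ((!cur) :: x :: mkPath x xs) (k + 2) = _
      rw [show k + 2 = (k+1)+1 from rfl, heightAt_cons, heightAt_cons]
      cases cur <;> cases x <;> simp [hOf] <;> ring
    constructor
    · intro k
      match k with
      | 0 => simp [heightAt_zero]; cases cur <;> simp [hOf]
      | 1 =>
        have he : mkPath cur (x :: xs) = (!cur) :: x :: mkPath x xs := rfl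
        rw [he, heightAt_cons, heightAt_zero]
        cases cur <;> simp [hOf]
      | (n+2) =>
        rw [key n]
        have := (ih x).1 n
        omega
    · have hlen : (mkPath cur (x :: xs)).length = (mkPath x xs).length + 2 := by
        show ((!cur) :: x :: mkPath x xs).length = _
        simp
      rw [hlen, key]
      have := (ih x).2
      omega

lemma mkPath_surj : ∀ n (p : List Bool), p.length = n → ∀ cur, p ≠ [] →
    (∀ k, 0 ≤ hOf cur + heightAt p k ∧ hOf cur + heightAt p k ≤ 2) →
    hOf cur + heightAt p p.length = 0 → ∃ b, mkPath cur b = p := by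
  intro n
  induction n using Nat.strong_induction_on with
  | _ n ih =>
  intro p hlen cur hne hb hf
  match p, hne with
  | [s], _ =>
    exfalso
    cases s <;> cases cur <;>
      simp [hOf, heightAt_cons, heightAt_zero] at hf
  | s :: x :: q, _ =>
    have hb1 := hb 1
    rw [heightAt_cons, heightAt_zero] at hb1
    have hs : s = !cur := by
      cases s <;> cases cur <;> simp [hOf] at hb1 ⊢ <;> omega
    subst hs
    cases q with
    | nil =>
      have hx : x = false := by
        have : ((!cur) :: [x]).length = 2 := by simp
        rw [this, show (2:ℕ) = 1 + 1 from rfl, heightAt_cons, heightAt_cons,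
          heightAt_zero] at hf
        cases x <;> cases cur <;> simp [hOf] at hf ⊢
      subst hx
      exact ⟨[], rfl⟩
    | cons y t =>
      have key : ∀ k, heightAt ((!cur) :: x :: y :: t) (k + 2) =
          (hOf x - hOf cur) + heightAt (y :: t) k := by
        intro k
        rw [show k + 2 = (k+1)+1 from rfl, heightAt_cons, heightAt_cons]
        cases cur <;> cases x <;> simp [hOf] <;> ring
      have hq : ∃ b, mkPath x b = y :: t := by
        apply ih (y :: t).length (by simp at hlen ⊢; omega) _ rfl x (by simp)
        · intro k
          have := hb (k + 2)
          rw [key k] at this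
          omega
        · have hlen2 : ((!cur) :: x :: y :: t).length = (y :: t).length + 2 := by simp
          rw [hlen2, key] at hf
          omega
      obtain ⟨b, hbq⟩ := hq
      exact ⟨x :: b, by rw [mkPath, hbq]⟩

lemma card_lists (m : ℕ) : Set.ncard {b : List Bool | b.length = m} = 2 ^ m := by
  rw [← Nat.card_coe_set_eq]
  have e : {b : List Bool | b.length = m} ≃ List.Vector Bool m := Equiv.refl _
  rw [Nat.card_congr e]
  simp [Nat.card_eq_fintype_card]

lemma main_char (n : ℕ) (hn : 1 ≤ n) :
    {p : List Bool | p.length = 2 * n ∧ IsDyck p ∧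
        (∀ r : ℕ, ¬ HasPeakAt p (2 * (r : ℤ) + 3)) ∧
        (∀ m : ℕ, 2 < m → ¬ HasUpRun p m)} =
      mkPath false '' {b : List Bool | b.length = n - 1} := by
  ext p
  simp only [Set.mem_setOf_eq, Set.mem_image]
  constructor
  · rintro ⟨hlen, hd, hpk, hur⟩
    have hht := height_le_two p hd hpk hur
    have hne : p ≠ [] := by
      intro h; rw [h] at hlen; simp at hlen; omega
    obtain ⟨b, hbp⟩ := mkPath_surj p.length p rfl false hne
      (fun k => ⟨by simpa [hOf] using hd.1 k, by simpa [hOf] using hht k⟩)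
      (by simpa [hOf] using hd.2)
    refine ⟨b, ?_, hbp⟩
    have := mkPath_length false b
    rw [hbp, hlen] at this
    omega
  · rintro ⟨b, hb, rfl⟩
    have hh := mkPath_heights b false
    have hd : IsDyck (mkPath false b) := by
      constructor
      · intro k; have := (hh.1 k).1; simpa [hOf] using this
      · have := hh.2; simpa [hOf] using this
    have hht : ∀ k, heightAt (mkPath false b) k ≤ 2 := fun k => by
      have := (hh.1 k).2; simpa [hOf] using this
    have hnb := no_bad_of_height_le_two _ hd hht
    refine ⟨?_, hd, hnb.1, hnb.2⟩
    rw [mkPath_length, hb]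
    omega

/-- The number of Dyck paths of semilength `n` with no peak at any height in
`{2r+3 : r ≥ 0}` and no up-run of length greater than 2 is `1` for `n = 0`
and `2^(n-1)` for `n ≥ 1`. -/
theorem stmt0 :
    (Set.ncard {p : List Bool | p.length = 2 * 0 ∧ IsDyck p ∧
        (∀ r : ℕ, ¬ HasPeakAt p (2 * (r : ℤ) + 3)) ∧
        (∀ m : ℕ, 2 < m → ¬ HasUpRun p m)} = 1) ∧
    (∀ n : ℕ, 1 ≤ n →
      Set.ncard {p : List Bool | p.length = 2 * n ∧ IsDyck p ∧
        (∀ r : ℕ, ¬ HasPeakAt p (2 * (r : ℤ) + 3)) ∧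
        (∀ m : ℕ, 2 < m → ¬ HasUpRun p m)} = 2 ^ (n - 1)) := by
  constructor
  · have : {p : List Bool | p.length = 2 * 0 ∧ IsDyck p ∧
        (∀ r : ℕ, ¬ HasPeakAt p (2 * (r : ℤ) + 3)) ∧
        (∀ m : ℕ, 2 < m → ¬ HasUpRun p m)} = {[]} := by
      ext p
      simp only [Set.mem_setOf_eq, Set.mem_singleton_iff]
      constructor
      · rintro ⟨hlen, -⟩
        exact List.length_eq_zero_iff.mp (by simpa using hlen)
      · rintro rfl
        refine ⟨by simp, ⟨fun k => by simp [heightAt], by simp [heightAt]⟩, ?_, ?_⟩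
        · rintro r ⟨i, hi, -⟩; simp at hi
        · rintro m hm ⟨i, hi, -⟩
          have := hi 0 (by omega)
          simp at this
    rw [this, Set.ncard_singleton]
  · intro n hn
    rw [main_char n hn,
      Set.ncard_image_of_injOn (fun b1 _ b2 _ h => mkPath_injective b1 b2 false h),
      card_lists]
end

section
/- For every n ≥ 0, the number of Dyck paths of semilength n with no up-run of length 3 or more equals the n-th Motzkin number, i.e., the number of Motzkin paths of length n. -/
/-- A Motzkin path: steps in `{+1, 0, −1}`, nonnegative partial sums, total sum zero. -/
def IsMotzkin (p : List ℤ) : Prop :=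
  (∀ s ∈ p, s = 1 ∨ s = 0 ∨ s = -1) ∧
  (∀ k, 0 ≤ (p.take k).sum) ∧ p.sum = 0

/-! The substitution `1 ↦ UUD`, `0 ↦ UD`, `-1 ↦ D` maps Motzkin paths of length `n` bijectively
onto Dyck paths of semilength `n` with no three consecutive up-steps. The three blocks form a prefix
code, and the words they generate are exactly the words with no `UUU` that do not end in `U`; a Dyck
path never ends in `U`. The height at each block boundary is the height of the Motzkin path, and
inside a block the height never drops below the lower of its two ends, so one path stays nonnegative
exactly when the other does. -/

theorem exists_hasUpRun_ge {p : List Bool} {i m : ℕ} (hm : 0 < m)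
    (hrun : ∀ j < m, p[i + j]? = some true) : ∃ m' ≥ m, HasUpRun p m' := by
  have hlen : i + m ≤ p.length := by
    have := (List.getElem?_eq_some_iff.mp (hrun (m - 1) (by omega))).1
    omega
  by_cases hleft : i = 0 ∨ p[i - 1]? = some false
  · by_cases hright : p[i + m]? = some false ∨ i + m = p.length
    · exact ⟨m, le_rfl, i, hrun, hleft, hright⟩
    · push Not at hright
      have hnext : p[i + m]? = some true := by
        have := hright.1
        rw [List.getElem?_eq_getElem (by omega)] at this ⊢
        simpa using this
      obtain ⟨m', hm', hrun'⟩ := exists_hasUpRun_ge (i := i) (m := m + 1) (by omega) fun j hj => by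
        rcases Nat.lt_succ_iff_lt_or_eq.mp hj with hj | rfl
        exacts [hrun j hj, hnext]
      exact ⟨m', by omega, hrun'⟩
  · push Not at hleft
    have hprev : p[i - 1]? = some true := by
      have := hleft.2
      rw [List.getElem?_eq_getElem (by omega)] at this ⊢
      simpa using this
    obtain ⟨m', hm', hrun'⟩ := exists_hasUpRun_ge (i := i - 1) (m := m + 1) (by omega) fun j hj => by
      rcases j with _ | j
      · simpa using hprev
      · rw [show i - 1 + (j + 1) = i + j by omega]
        exact hrun j (by omega)
    exact ⟨m', by omega, hrun'⟩
termination_by p.length - m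

theorem exists_three_le_hasUpRun_iff (p : List Bool) :
    (∃ m ≥ 3, HasUpRun p m) ↔ [true, true, true] <:+: p := by
  rw [List.infix_iff_getElem?]
  constructor
  · rintro ⟨m, hm, i, hrun, -⟩
    refine ⟨i, ?_, fun j hj => ?_⟩
    · have := (List.getElem?_eq_some_iff.mp (hrun 2 (by omega))).1
      simp only [List.length_cons, List.length_nil]
      omega
    · simp only [List.length_cons, List.length_nil] at hj
      rw [add_comm]
      interval_cases j <;> exact hrun _ (by omega)
  · rintro ⟨i, -, hi⟩
    exact exists_hasUpRun_ge (p := p) (i := i) (m := 3) (by norm_num) fun j hj => by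
      rw [add_comm]
      interval_cases j <;> exact hi _ (by simp)

def pathHeight (p : List Bool) : ℤ := (p.count true : ℤ) - p.count false

@[simp] theorem pathHeight_append (p q : List Bool) :
    pathHeight (p ++ q) = pathHeight p + pathHeight q := by
  simp only [pathHeight, List.count_append]
  push_cast
  ring

theorem isDyck_iff_pathHeight (p : List Bool) :
    IsDyck p ↔ (∀ k, 0 ≤ pathHeight (p.take k)) ∧ pathHeight p = 0 := by
  simp only [IsDyck, heightAt, pathHeight, List.take_length]

theorem not_suffix_true_of_isDyck {p : List Bool} (hp : IsDyck p) : ¬ [true] <:+ p := by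
  rintro ⟨q, rfl⟩
  rw [isDyck_iff_pathHeight] at hp
  have hq := hp.1 q.length
  have hsum := hp.2
  rw [List.take_left] at hq
  rw [pathHeight_append, show pathHeight [true] = 1 from rfl] at hsum
  omega

def dyckBlock (s : ℤ) : List Bool :=
  if s = 1 then [true, true, false] else if s = 0 then [true, false] else [false]

def dyckOfMotzkin (M : List ℤ) : List Bool := M.flatMap dyckBlock

def motzkinOfDyck : List Bool → List ℤ
  | false :: p => -1 :: motzkinOfDyck p
  | true :: false :: p => 0 :: motzkinOfDyck p
  | true :: true :: false :: p => 1 :: motzkinOfDyck p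
  | _ => []

@[simp] theorem dyckOfMotzkin_cons (s : ℤ) (M : List ℤ) :
    dyckOfMotzkin (s :: M) = dyckBlock s ++ dyckOfMotzkin M := List.flatMap_cons

theorem dyckOfMotzkin_append (M N : List ℤ) :
    dyckOfMotzkin (M ++ N) = dyckOfMotzkin M ++ dyckOfMotzkin N := List.flatMap_append

section Block

variable {s : ℤ} (hs : s = 1 ∨ s = 0 ∨ s = -1)
include hs

theorem pathHeight_dyckBlock : pathHeight (dyckBlock s) = s := by
  rcases hs with rfl | rfl | rfl <;> rfl

theorem length_dyckBlock : ((dyckBlock s).length : ℤ) = 2 + s := by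
  rcases hs with rfl | rfl | rfl <;> rfl

theorem pathHeight_take_dyckBlock_nonneg {c : ℤ} (hc : 0 ≤ c) (hcs : 0 ≤ c + s) (k : ℕ) :
    0 ≤ c + pathHeight ((dyckBlock s).take k) := by
  rcases hs with rfl | rfl | rfl <;> rcases k with _ | _ | _ | k <;>
    simp [dyckBlock, pathHeight] <;> omega

end Block

section Path

variable {M : List ℤ} (hM : ∀ s ∈ M, s = 1 ∨ s = 0 ∨ s = -1)
include hM

theorem pathHeight_dyckOfMotzkin : pathHeight (dyckOfMotzkin M) = M.sum := by
  induction M with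
  | nil => rfl
  | cons s M ih =>
    simp only [List.forall_mem_cons] at hM
    simp [pathHeight_dyckBlock hM.1, ih hM.2]

theorem length_dyckOfMotzkin : ((dyckOfMotzkin M).length : ℤ) = 2 * M.length + M.sum := by
  induction M with
  | nil => rfl
  | cons s M ih =>
    simp only [List.forall_mem_cons] at hM
    simp only [dyckOfMotzkin_cons, List.length_append, Nat.cast_add, length_dyckBlock hM.1,
      ih hM.2, List.length_cons, List.sum_cons]
    push_cast
    ring

theorem motzkinOfDyck_dyckOfMotzkin : motzkinOfDyck (dyckOfMotzkin M) = M := by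
  induction M with
  | nil => rfl
  | cons s M ih =>
    simp only [List.forall_mem_cons] at hM
    rcases hM.1 with rfl | rfl | rfl <;> simp [dyckBlock, motzkinOfDyck, ih hM.2]

theorem not_infix_dyckOfMotzkin : ¬ [true, true, true] <:+: dyckOfMotzkin M := by
  induction M with
  | nil => simp [dyckOfMotzkin]
  | cons s M ih =>
    simp only [List.forall_mem_cons] at hM
    rcases hM.1 with rfl | rfl | rfl <;> simp [dyckBlock, List.infix_cons_iff, ih hM.2]

theorem pathHeight_take_dyckOfMotzkin_nonneg {c : ℤ} (hc : ∀ j, 0 ≤ c + (M.take j).sum) (k : ℕ) :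
    0 ≤ c + pathHeight ((dyckOfMotzkin M).take k) := by
  induction M generalizing c k with
  | nil => simpa [dyckOfMotzkin, pathHeight] using hc 0
  | cons s M ih =>
    simp only [List.forall_mem_cons] at hM
    have hc0 : 0 ≤ c := by simpa using hc 0
    have hc1 : 0 ≤ c + s := by simpa using hc 1
    rw [dyckOfMotzkin_cons, List.take_append, pathHeight_append]
    by_cases hk : k ≤ (dyckBlock s).length
    · simpa [Nat.sub_eq_zero_of_le hk, pathHeight] using
        pathHeight_take_dyckBlock_nonneg hM.1 hc0 hc1 k
    · rw [List.take_of_length_le (by omega), pathHeight_dyckBlock hM.1, ← add_assoc]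
      exact ih hM.2 (fun j => by simpa [add_assoc] using hc (j + 1)) _

theorem isDyck_dyckOfMotzkin_iff :
    IsDyck (dyckOfMotzkin M) ↔ (∀ k, 0 ≤ (M.take k).sum) ∧ M.sum = 0 := by
  rw [isDyck_iff_pathHeight, pathHeight_dyckOfMotzkin hM]
  refine and_congr_left fun _ => ⟨fun h k => ?_, fun h k => by
    simpa using pathHeight_take_dyckOfMotzkin_nonneg hM (c := 0) (by simpa using h) k⟩
  have hprefix : dyckOfMotzkin (M.take k) <+: dyckOfMotzkin M := by
    conv_rhs => rw [← List.take_append_drop k M, dyckOfMotzkin_append]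
    exact List.prefix_append _ _
  rw [← pathHeight_dyckOfMotzkin fun s hs => hM s (List.mem_of_mem_take hs),
    List.prefix_iff_eq_take.mp hprefix]
  exact h _

end Path

theorem motzkinOfDyck_mem (p : List Bool) : ∀ s ∈ motzkinOfDyck p, s = 1 ∨ s = 0 ∨ s = -1 := by
  induction p using motzkinOfDyck.induct <;> simp_all [motzkinOfDyck]

theorem dyckOfMotzkin_motzkinOfDyck {p : List Bool} (hp : ¬ [true, true, true] <:+: p)
    (hlast : ¬ [true] <:+ p) : dyckOfMotzkin (motzkinOfDyck p) = p := by
  induction p using motzkinOfDyck.induct with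
  | case4 p hD hUD hUUD =>
    rcases p with _ | ⟨_ | _, _ | ⟨_ | _, _ | ⟨_ | _, p⟩⟩⟩ <;>
      simp_all [motzkinOfDyck, dyckOfMotzkin, List.infix_cons_iff]
  | _ => simp_all [motzkinOfDyck, dyckBlock, List.infix_cons_iff, List.suffix_cons_iff]

theorem injOn_dyckOfMotzkin :
    Set.InjOn dyckOfMotzkin {M : List ℤ | ∀ s ∈ M, s = 1 ∨ s = 0 ∨ s = -1} :=
  Set.LeftInvOn.injOn (f₁' := motzkinOfDyck) fun _ hM => motzkinOfDyck_dyckOfMotzkin hM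

theorem image_dyckOfMotzkin (n : ℕ) :
    dyckOfMotzkin '' {M : List ℤ | M.length = n ∧ IsMotzkin M} =
      {p : List Bool | p.length = 2 * n ∧ IsDyck p ∧ ¬ [true, true, true] <:+: p} := by
  ext p
  constructor
  · rintro ⟨M, ⟨rfl, hsteps, hM⟩, rfl⟩
    have := length_dyckOfMotzkin hsteps
    exact ⟨by omega, (isDyck_dyckOfMotzkin_iff hsteps).mpr hM, not_infix_dyckOfMotzkin hsteps⟩
  · rintro ⟨hlen, hp, hT⟩
    have hsteps := motzkinOfDyck_mem p
    have hinv := dyckOfMotzkin_motzkinOfDyck hT (not_suffix_true_of_isDyck hp)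
    rw [← hinv] at hp hlen
    have hM := (isDyck_dyckOfMotzkin_iff hsteps).mp hp
    have := length_dyckOfMotzkin hsteps
    exact ⟨_, ⟨by omega, hsteps, hM⟩, hinv⟩

/-- The number of Dyck paths of semilength `n` with no up-run of length 3 or more equals
the number of Motzkin paths of length `n`. -/
theorem stmt5 (n : ℕ) :
    Set.ncard {p : List Bool | p.length = 2 * n ∧ IsDyck p ∧
        (∀ m : ℕ, 3 ≤ m → ¬ HasUpRun p m)} =
      Set.ncard {p : List ℤ | p.length = n ∧ IsMotzkin p} := by
  have hrun (p : List Bool) : (∀ m, 3 ≤ m → ¬ HasUpRun p m) ↔ ¬ [true, true, true] <:+: p := by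
    rw [← exists_three_le_hasUpRun_iff]
    simp
  simp_rw [hrun, ← image_dyckOfMotzkin]
  exact (injOn_dyckOfMotzkin.mono fun _ hM => hM.2.1).ncard_image
end

section
/- Let a_n be the number of Dyck paths of semilength n with no up-run of length 3 or more. Then a_0 = 1, a_1 = 1, and for every n ≥ 2, a_n = a_{n−1} + Σ_{k=0}^{n−2} a_k · a_{n−2−k} (equivalently, the generating function P of these paths satisfies P = 1 + z·P + z^2·P^2 as formal power series). -/
/-!
Write a nonempty Dyck word as `w = U i D o` (first-return decomposition). Since the pattern `UUU`
contains no `D`, it occurs in `w` exactly when it occurs in `i`, in `o`, or at the start of `U i`,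
that is, when `i` begins with `UU`. Hence a nonempty `UUU`-avoiding word is either `U D o` or
`U U D k D o` with `k`, `o` again `UUU`-avoiding, and both shapes are uniquely decomposable;
this gives `P = 1 + z P + z² P²`.
-/

namespace List

variable {α : Type*} {l a b : List α} {x : α}

theorem prefix_append_cons_iff_of_not_mem (hx : x ∉ l) : l <+: a ++ x :: b ↔ l <+: a := by
  induction a generalizing l with
  | nil =>
    rw [nil_append, prefix_cons_iff, prefix_nil]
    refine ⟨?_, .inl⟩
    rintro (rfl | ⟨t, rfl, -⟩)
    · rfl
    · exact absurd mem_cons_self hx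
  | cons c a ih =>
    rw [cons_append, prefix_cons_iff, prefix_cons_iff]
    refine or_congr_right (exists_congr fun t => and_congr_right fun ht => ih ?_)
    exact fun h => hx (ht ▸ mem_cons_of_mem c h)

theorem infix_append_cons_iff_of_not_mem (hx : x ∉ l) :
    l <:+: a ++ x :: b ↔ l <:+: a ∨ l <:+: b := by
  induction a with
  | nil =>
    have h := prefix_append_cons_iff_of_not_mem (a := []) (b := b) hx
    rw [nil_append, prefix_nil] at h
    rw [nil_append, infix_cons_iff, h, infix_nil]
  | cons c a ih =>
    rw [cons_append, infix_cons_iff, infix_cons_iff, ih, ← cons_append,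
      prefix_append_cons_iff_of_not_mem hx, or_assoc]

variable {p : List Bool}

theorem getElem?_eq_some_false_of_ne_some_true {i : ℕ} (h : p[i]? ≠ some true)
    (hi : i < p.length) : p[i]? = some false := by
  rw [getElem?_eq_getElem hi] at h ⊢
  simpa using h

theorem exists_maximal_block_start {i : ℕ} (h : p[i]? = some true) :
    ∃ s ≤ i, (∀ j, s ≤ j → j ≤ i → p[j]? = some true) ∧ (s = 0 ∨ p[s - 1]? = some false) := by
  induction i with
  | zero => exact ⟨0, le_rfl, fun j _ hj => by rwa [Nat.le_zero.mp hj], .inl rfl⟩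
  | succ i ih =>
    by_cases hi : p[i]? = some true
    · obtain ⟨s, hsi, hblock, hs⟩ := ih hi
      refine ⟨s, by omega, fun j hsj hji => ?_, hs⟩
      rcases Nat.lt_or_eq_of_le hji with hji | rfl
      · exact hblock j hsj (by omega)
      · exact h
    · have hlen : i + 1 < p.length := (getElem?_eq_some_iff.mp h).1
      refine ⟨i + 1, le_rfl, fun j hj hj' => by rwa [Nat.le_antisymm hj' hj], .inr ?_⟩
      exact getElem?_eq_some_false_of_ne_some_true hi (by omega)

theorem exists_maximal_block_end {i : ℕ} (h : p[i]? = some true) :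
    ∃ e > i, (∀ j, i ≤ j → j < e → p[j]? = some true) ∧
      (p[e]? = some false ∨ e = p.length) := by
  have hlen : i < p.length := (getElem?_eq_some_iff.mp h).1
  by_cases hi : p[i + 1]? = some true
  · have : i + 1 < p.length := (getElem?_eq_some_iff.mp hi).1
    obtain ⟨e, hie, hblock, he⟩ := exists_maximal_block_end hi
    refine ⟨e, by omega, fun j hij hje => ?_, he⟩
    rcases Nat.lt_or_eq_of_le hij with hij | rfl
    · exact hblock j hij hje
    · exact h
  · refine ⟨i + 1, by omega, fun j hij hje => by rwa [Nat.le_antisymm (by omega) hij], ?_⟩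
    rcases Nat.lt_or_eq_of_le (Nat.succ_le_of_lt hlen) with hlt | heq
    · exact .inl (getElem?_eq_some_false_of_ne_some_true hi hlt)
    · exact .inr heq
termination_by p.length - i

end List

section UpRuns

variable {p : List Bool} {k m : ℕ}

theorem replicate_infix_of_hasUpRun (hkm : k ≤ m) (h : HasUpRun p m) :
    List.replicate k true <:+: p := by
  obtain ⟨i, hblock, -, hend⟩ := h
  have hlen : i + m ≤ p.length := by
    rcases hend with hend | hend
    · exact (List.getElem?_eq_some_iff.mp hend).1.le
    · exact hend.le
  refine List.infix_iff_getElem?.mpr ⟨i, by rw [List.length_replicate]; omega, fun j hj => ?_⟩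
  rw [List.getElem_replicate, add_comm]
  exact hblock j (by rw [List.length_replicate] at hj; omega)

theorem exists_hasUpRun_of_replicate_infix (hk : 0 < k) (h : List.replicate k true <:+: p) :
    ∃ m, k ≤ m ∧ HasUpRun p m := by
  obtain ⟨i, -, hblock⟩ := List.infix_iff_getElem?.mp h
  simp only [List.length_replicate, List.getElem_replicate] at hblock
  obtain ⟨s, hsi, hleft, hs⟩ := List.exists_maximal_block_start (by simpa using hblock 0 hk)
  obtain ⟨e, hie, hright, he⟩ := List.exists_maximal_block_end
    (by simpa [Nat.sub_add_cancel hk] using hblock (k - 1) (by omega))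
  refine ⟨e - s, by omega, s, fun j hj => ?_, hs, by rwa [Nat.add_sub_cancel' (by omega)]⟩
  rcases le_or_gt (s + j) i with hji | hij
  · exact hleft _ (by omega) hji
  rcases le_or_gt (s + j) (k - 1 + i) with hjk | hkj
  · simpa [show s + j - i + i = s + j by omega] using hblock (s + j - i) (by omega)
  · exact hright _ hkj.le (by omega)

theorem forall_not_hasUpRun_iff (hk : 0 < k) :
    (∀ m, k ≤ m → ¬ HasUpRun p m) ↔ ¬ List.replicate k true <:+: p := by
  refine ⟨fun h hinf => ?_, fun h m hkm hrun => h (replicate_infix_of_hasUpRun hkm hrun)⟩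
  obtain ⟨m, hkm, hrun⟩ := exists_hasUpRun_of_replicate_infix hk hinf
  exact h m hkm hrun

end UpRuns

open DyckStep

def DyckStep.equivBool : DyckStep ≃ Bool where
  toFun s := s = U
  invFun b := if b then U else D
  left_inv s := by cases s <;> rfl
  right_inv b := by cases b <;> rfl

namespace DyckWord

def toBools (w : DyckWord) : List Bool := w.toList.map DyckStep.equivBool

theorem toBools_injective : Function.Injective toBools := fun _ _ h =>
  DyckWord.ext (List.map_injective_iff.mpr DyckStep.equivBool.injective h)

theorem length_toBools (w : DyckWord) : w.toBools.length = 2 * w.semilength := by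
  simp [toBools]

theorem heightAt_map_equivBool (l : List DyckStep) (k : ℕ) :
    heightAt (l.map DyckStep.equivBool) k = (l.take k).count U - (l.take k).count D := by
  have hU : DyckStep.equivBool U = true := rfl
  have hD : DyckStep.equivBool D = false := rfl
  simp only [heightAt, ← List.map_take, ← hU, ← hD,
    List.count_map_of_injective _ _ DyckStep.equivBool.injective]

theorem isDyck_iff_exists_toBools_eq {p : List Bool} :
    IsDyck p ↔ ∃ w : DyckWord, w.toBools = p := by
  constructor
  · rintro ⟨hnonneg, hzero⟩
    set l := p.map DyckStep.equivBool.symm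
    have hl : l.map DyckStep.equivBool = p := by simp [l]
    refine ⟨⟨l, ?_, fun i => ?_⟩, hl⟩
    · have := heightAt_map_equivBool l l.length
      rw [hl, List.take_length, show l.length = p.length by simp [l], hzero] at this
      omega
    · have := heightAt_map_equivBool l i
      rw [hl] at this
      have := hnonneg i
      omega
  · rintro ⟨w, rfl⟩
    refine ⟨fun k => ?_, ?_⟩
    · rw [toBools, heightAt_map_equivBool]
      have := w.count_D_le_count_U k
      omega
    · rw [toBools, List.length_map, heightAt_map_equivBool, List.take_length,
        w.count_U_eq_count_D, sub_self]

theorem toList_zero : (0 : DyckWord).toList = [] := rfl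

theorem toList_nest_add (i o : DyckWord) :
    (i.nest + o).toList = U :: (i.toList ++ D :: o.toList) := by
  change [U] ++ i.toList ++ [D] ++ o.toList = _
  simp

theorem exists_eq_nest_add {w : DyckWord} (hw : w ≠ 0) : ∃ i o : DyckWord, w = i.nest + o :=
  ⟨_, _, (nest_insidePart_add_outsidePart hw).symm⟩

theorem nest_add_inj {i o i' o' : DyckWord} : i.nest + o = i'.nest + o' ↔ i = i' ∧ o = o' := by
  refine ⟨fun h => ?_, fun ⟨hi, ho⟩ => hi ▸ ho ▸ rfl⟩
  have hin := congrArg insidePart h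
  have hout := congrArg outsidePart h
  simp only [insidePart_add nest_ne_zero, outsidePart_add nest_ne_zero, insidePart_nest,
    outsidePart_nest, zero_add] at hin hout
  exact ⟨hin, hout⟩

theorem semilength_eq_zero_iff {w : DyckWord} : w.semilength = 0 ↔ w = 0 := by
  refine ⟨fun h => ?_, fun h => h ▸ semilength_zero⟩
  by_contra hw
  have := semilength_insidePart_lt hw
  omega

theorem U_prefix_toList_iff (w : DyckWord) : [U] <+: w.toList ↔ w ≠ 0 := by
  rw [← toList_ne_nil]
  refine ⟨fun h hnil => by simp [hnil] at h, fun h => ?_⟩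
  rw [← List.cons_head_tail h, head_eq_U]
  exact List.singleton_prefix_cons_iff.mpr rfl

theorem UU_prefix_nest_add_iff (j k : DyckWord) : [U, U] <+: (j.nest + k).toList ↔ j ≠ 0 := by
  rw [toList_nest_add, List.cons_prefix_cons, List.prefix_append_cons_iff_of_not_mem (by decide),
    U_prefix_toList_iff, and_iff_right rfl]

def AvoidsUUU (w : DyckWord) : Prop := ¬ [U, U, U] <:+: w.toList

instance : DecidablePred AvoidsUUU := fun _ => inferInstanceAs (Decidable (¬ _))

theorem replicate_true_infix_toBools_iff {k : ℕ} {w : DyckWord} :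
    List.replicate k true <:+: w.toBools ↔ List.replicate k U <:+: w.toList := by
  have hU : List.replicate k true = (List.replicate k U).map DyckStep.equivBool := by
    rw [List.map_replicate]; rfl
  rw [hU, toBools]
  refine ⟨fun h => ?_, (·.map _)⟩
  obtain ⟨l, hl, heq⟩ := List.infix_map_iff.mp h
  rwa [(List.map_injective_iff.mpr DyckStep.equivBool.injective) heq]

theorem avoidsUUU_zero : AvoidsUUU 0 := by
  simp [AvoidsUUU, toList_zero]

theorem avoidsUUU_nest_add_iff (i o : DyckWord) :
    (i.nest + o).AvoidsUUU ↔ ¬ [U, U] <+: i.toList ∧ i.AvoidsUUU ∧ o.AvoidsUUU := by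
  rw [AvoidsUUU, toList_nest_add, List.infix_cons_iff, List.cons_prefix_cons,
    List.prefix_append_cons_iff_of_not_mem (by decide),
    List.infix_append_cons_iff_of_not_mem (by decide)]
  simp only [AvoidsUUU, true_and, not_or]

theorem avoidsUUU_nest_zero_add_iff (o : DyckWord) : (nest 0 + o).AvoidsUUU ↔ o.AvoidsUUU := by
  simp [avoidsUUU_nest_add_iff, toList_zero, avoidsUUU_zero]

theorem avoidsUUU_nest_nest_zero_add_add_iff (k o : DyckWord) :
    ((nest 0 + k).nest + o).AvoidsUUU ↔ k.AvoidsUUU ∧ o.AvoidsUUU := by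
  rw [avoidsUUU_nest_add_iff, UU_prefix_nest_add_iff, avoidsUUU_nest_zero_add_iff]
  simp

open Finset

def avoidingUUU (n : ℕ) : Finset DyckWord :=
  ((univ : Finset {w : DyckWord // w.semilength = n}).map (Function.Embedding.subtype _)).filter
    AvoidsUUU

theorem mem_avoidingUUU {n : ℕ} {w : DyckWord} :
    w ∈ avoidingUUU n ↔ w.semilength = n ∧ w.AvoidsUUU := by
  simp [avoidingUUU]

theorem avoidingUUU_zero : avoidingUUU 0 = {0} := by
  ext w
  rw [mem_avoidingUUU, semilength_eq_zero_iff, mem_singleton]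
  exact ⟨And.left, fun h => ⟨h, h ▸ avoidsUUU_zero⟩⟩

theorem avoidingUUU_one : avoidingUUU 1 = {nest 0} := by
  ext w
  rw [mem_avoidingUUU, mem_singleton]
  constructor
  · rintro ⟨hsl, -⟩
    obtain ⟨i, o, rfl⟩ := exists_eq_nest_add (w := w) (by rintro rfl; simp at hsl)
    simp only [semilength_add, semilength_nest] at hsl
    rw [semilength_eq_zero_iff.mp (by omega : i.semilength = 0),
      semilength_eq_zero_iff.mp (by omega : o.semilength = 0), add_zero]
  · rintro rfl
    refine ⟨by simp, ?_⟩
    simpa using avoidsUUU_nest_zero_add_iff 0 |>.mpr avoidsUUU_zero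

theorem avoidingUUU_add_two (n : ℕ) :
    avoidingUUU (n + 2) = (avoidingUUU (n + 1)).image (nest 0 + ·) ∪
      ((antidiagonal n).biUnion fun ij => avoidingUUU ij.1 ×ˢ avoidingUUU ij.2).image
        fun ko => (nest 0 + ko.1).nest + ko.2 := by
  ext w
  simp only [mem_union, mem_image, mem_biUnion, mem_product, HasAntidiagonal.mem_antidiagonal,
    mem_avoidingUUU, Prod.exists]
  constructor
  · rintro ⟨hsl, hav⟩
    obtain ⟨i, o, rfl⟩ := exists_eq_nest_add (w := w) (by rintro rfl; simp at hsl)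
    obtain ⟨hUU, hi, ho⟩ := (avoidsUUU_nest_add_iff i o).mp hav
    simp only [semilength_add, semilength_nest] at hsl
    by_cases hi0 : i = 0
    · subst hi0
      exact .inl ⟨o, ⟨by rw [semilength_zero] at hsl; omega, ho⟩, rfl⟩
    obtain ⟨j, k, rfl⟩ := exists_eq_nest_add hi0
    obtain rfl : j = 0 := not_not.mp ((UU_prefix_nest_add_iff j k).not.mp hUU)
    refine .inr ⟨k, o, ⟨k.semilength, o.semilength, ?_, ⟨rfl, ?_⟩, rfl, ho⟩, rfl⟩
    · simp only [semilength_add, semilength_nest, semilength_zero] at hsl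
      omega
    · exact (avoidsUUU_nest_zero_add_iff k).mp hi
  · rintro (⟨o, ⟨hsl, ho⟩, rfl⟩ | ⟨k, o, ⟨a, b, hab, ⟨rfl, hk⟩, rfl, ho⟩, rfl⟩)
    · refine ⟨?_, (avoidsUUU_nest_zero_add_iff o).mpr ho⟩
      simp only [semilength_add, semilength_nest, semilength_zero, hsl]
      omega
    · refine ⟨?_, (avoidsUUU_nest_nest_zero_add_add_iff k o).mpr ⟨hk, ho⟩⟩
      simp only [semilength_add, semilength_nest, semilength_zero]
      omega

theorem card_avoidingUUU_add_two (n : ℕ) :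
    #(avoidingUUU (n + 2)) = #(avoidingUUU (n + 1)) +
      ∑ ij ∈ antidiagonal n, #(avoidingUUU ij.1) * #(avoidingUUU ij.2) := by
  rw [avoidingUUU_add_two, card_union_of_disjoint,
    card_image_of_injective _ (add_right_injective _), card_image_of_injective, card_biUnion]
  · simp only [card_product]
  · intro ij _ ij' _ hne
    refine disjoint_left.mpr fun ko hko hko' => hne ?_
    simp only [mem_product, mem_avoidingUUU] at hko hko'
    exact Prod.ext (hko.1.1.symm.trans hko'.1.1) (hko.2.1.symm.trans hko'.2.1)
  · rintro ⟨k, o⟩ ⟨k', o'⟩ h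
    obtain ⟨hk, ho⟩ := nest_add_inj.mp h
    exact Prod.ext (add_left_cancel hk) ho
  · refine disjoint_left.mpr fun w hw hw' => ?_
    obtain ⟨o, -, rfl⟩ := mem_image.mp hw
    obtain ⟨⟨k, o'⟩, -, h⟩ := mem_image.mp hw'
    have := congrArg semilength (nest_add_inj.mp h).1
    simp at this

theorem ncard_setOf_forall_not_hasUpRun_eq_card_avoidingUUU (n : ℕ) :
    {p : List Bool | p.length = 2 * n ∧ IsDyck p ∧ ∀ m, 3 ≤ m → ¬ HasUpRun p m}.ncard =
      #(avoidingUUU n) := by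
  rw [← card_image_of_injective _ toBools_injective, ← Set.ncard_coe_finset]
  congr 1
  ext p
  simp only [Set.mem_ofPred_eq, coe_image, Set.mem_image, mem_coe, mem_avoidingUUU,
    isDyck_iff_exists_toBools_eq, forall_not_hasUpRun_iff three_pos]
  constructor
  · rintro ⟨hlen, ⟨w, rfl⟩, hav⟩
    rw [length_toBools] at hlen
    exact ⟨w, ⟨by omega, replicate_true_infix_toBools_iff.not.mp hav⟩, rfl⟩
  · rintro ⟨w, ⟨rfl, hav⟩, rfl⟩
    exact ⟨length_toBools w, ⟨w, rfl⟩, replicate_true_infix_toBools_iff.not.mpr hav⟩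

end DyckWord

open PowerSeries Finset in
theorem PowerSeries.mk_eq_one_add_X_mul_add_X_sq_mul_sq {R : Type*} [CommSemiring R] {a : ℕ → R}
    (h0 : a 0 = 1) (h1 : a 1 = 1)
    (h : ∀ n, a (n + 2) = a (n + 1) + ∑ ij ∈ antidiagonal n, a ij.1 * a ij.2) :
    mk a = 1 + X * mk a + X ^ 2 * mk a ^ 2 := by
  ext (_ | _ | n)
  · simp [h0]
  · simp [coeff_X_pow_mul', h1, h0]
  · rw [map_add, map_add, coeff_one, if_neg (by omega), zero_add, coeff_succ_X_mul,
      coeff_X_pow_mul', if_pos (by omega), show n + 1 + 1 - 2 = n by omega, sq, coeff_mul]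
    simp only [coeff_mk, h]

open DyckWord Finset

/-- With `a n` the number of Dyck paths of semilength `n` having no up-run of length 3 or
more: `a 0 = 1`, `a 1 = 1`, and `a n = a (n-1) + ∑_{k=0}^{n-2} a k * a (n-2-k)` for `n ≥ 2`;
equivalently the generating function `P` satisfies `P = 1 + zP + z²P²`. -/
theorem stmt6 :
    let a : ℕ → ℕ := fun n => Set.ncard {p : List Bool | p.length = 2 * n ∧ IsDyck p ∧
      (∀ m : ℕ, 3 ≤ m → ¬ HasUpRun p m)}
    let P := genFun (fun p => ∀ m : ℕ, 3 ≤ m → ¬ HasUpRun p m)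
    a 0 = 1 ∧ a 1 = 1 ∧
    (∀ n : ℕ, 2 ≤ n → a n = a (n - 1) + ∑ k ∈ Finset.range (n - 1), a k * a (n - 2 - k)) ∧
    P = 1 + PowerSeries.X * P + PowerSeries.X ^ 2 * P ^ 2 := by
  intro a P
  have ha (n : ℕ) : a n = #(avoidingUUU n) :=
    ncard_setOf_forall_not_hasUpRun_eq_card_avoidingUUU n
  have h0 : a 0 = 1 := by rw [ha, avoidingUUU_zero, card_singleton]
  have h1 : a 1 = 1 := by rw [ha, avoidingUUU_one, card_singleton]
  have hrec (n : ℕ) : a (n + 2) = a (n + 1) + ∑ ij ∈ antidiagonal n, a ij.1 * a ij.2 := by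
    simp only [ha]
    exact card_avoidingUUU_add_two n
  refine ⟨h0, h1, fun n hn => ?_, PowerSeries.mk_eq_one_add_X_mul_add_X_sq_mul_sq h0 h1 hrec⟩
  obtain ⟨n, rfl⟩ := Nat.exists_eq_add_of_le' hn
  rw [hrec, Nat.sum_antidiagonal_eq_sum_range_succ_mk, Nat.add_sub_cancel]
  rfl
end

section
/- For every n ≥ 0, the number of Dyck paths of semilength 2n+1 such that no peak and no valley occurs at a positive even height equals the binomial coefficient C(2n, n). -/
/-!
The height after `k` steps has the parity of `k`, so a turn at a positive even height can only sit
between two consecutive pairs of steps `(2i - 2, 2i - 1)` and `(2i, 2i + 1)`. Hence in a good path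
the first step of every pair is forced (up at height `0`, otherwise a repetition of the previous
step), and the path is determined by the sequence `s` of the second steps of its pairs. The path
returns to `0` exactly when every nonempty suffix of `s` has negative sum; reversing `s` and removing
its final down-step turns these sequences of length `2n + 1` into the walks of length `2n` whose
partial sums are all `≤ 0`. If `W L` counts such walks of length `L`, then
`W (L + 1) = 2 W L - [L even] Cat (L / 2)`, the Catalan term counting the walks that end at `0`
(Dyck words with the two kinds of steps exchanged), and this recursion gives `W (2n) = C(2n, n)`.
-/

namespace DyckEvenTurn

open DyckStep

def step (b : Bool) : ℤ := if b then 1 else -1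

@[simp] lemma step_true : step true = 1 := rfl

@[simp] lemma step_false : step false = -1 := rfl

def stepSum (l : List Bool) : ℤ := (l.count true : ℤ) - (l.count false : ℤ)

@[simp] lemma stepSum_nil : stepSum [] = 0 := rfl

@[simp] lemma stepSum_cons (a : Bool) (l : List Bool) : stepSum (a :: l) = step a + stepSum l := by
  cases a <;> simp [stepSum] <;> ring

@[simp] lemma stepSum_append (l l' : List Bool) : stepSum (l ++ l') = stepSum l + stepSum l' := by
  simp only [stepSum, List.count_append]; push_cast; ring

@[simp] lemma stepSum_reverse (l : List Bool) : stepSum l.reverse = stepSum l := by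
  simp [stepSum]

lemma stepSum_eq_two_mul_count_sub_length (l : List Bool) :
    stepSum l = 2 * l.count true - l.length := by
  have := l.count_true_add_count_false
  simp only [stepSum]; omega

lemma heightAt_eq_stepSum_take (p : List Bool) (k : ℕ) : heightAt p k = stepSum (p.take k) := rfl

@[simp] lemma heightAt_zero (p : List Bool) : heightAt p 0 = 0 := rfl

@[simp] lemma heightAt_cons_succ (a : Bool) (p : List Bool) (k : ℕ) :
    heightAt (a :: p) (k + 1) = step a + heightAt p k := by
  simp [heightAt_eq_stepSum_take]

lemma heightAt_length (p : List Bool) : heightAt p p.length = stepSum p := by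
  simp [heightAt_eq_stepSum_take]

lemma odd_step (b : Bool) : Odd (step b) := by
  cases b <;> decide

section PairDecomposition

/-- The first step of a pair in a good path, when the path stands at the even height `h` after the
step `d`. -/
def forcedStep (d : Bool) (h : ℤ) : Bool := if h = 0 then true else d

/-- The path, started at height `h` after the step `d`, whose pairs of steps have the forced first
steps and the second steps `s`. -/
def expand (d : Bool) (h : ℤ) : List Bool → List Bool
  | [] => []
  | t :: s => forcedStep d h :: t :: expand t (h + step (forcedStep d h) + step t) s

def secondSteps : List Bool → List Bool
  | [] => []
  | [_] => []
  | _ :: b :: r => b :: secondSteps r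

@[simp] lemma length_expand (d : Bool) (h : ℤ) (s : List Bool) :
    (expand d h s).length = 2 * s.length := by
  induction s generalizing d h with
  | nil => rfl
  | cons t s ih => simp only [expand, List.length_cons, ih]; ring

@[simp] lemma secondSteps_expand (d : Bool) (h : ℤ) (s : List Bool) :
    secondSteps (expand d h s) = s := by
  induction s generalizing d h with
  | nil => rfl
  | cons t s ih => simp [expand, secondSteps, ih]

lemma expand_injective (d : Bool) (h : ℤ) : Function.Injective (expand d h) :=
  Function.LeftInverse.injective (secondSteps_expand d h)

def NoEvenTurn (h : ℤ) (p : List Bool) : Prop :=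
  ∀ i x y, p[i]? = some x → p[i + 1]? = some y → x ≠ y →
    0 < h + heightAt p (i + 1) → ¬ Even (h + heightAt p (i + 1))

/-- `p` continues a path without turns at positive even heights that has reached height `h` with
the step `d`, and brings it back to `0` without creating such a turn. -/
def IsGoodTail (d : Bool) (h : ℤ) (p : List Bool) : Prop :=
  (∀ k, 0 ≤ h + heightAt p k) ∧ h + stepSum p = 0 ∧ NoEvenTurn h p ∧
    ∀ x, p[0]? = some x → 0 < h → x = d

variable {h : ℤ}

lemma forall_nonneg_heightAt_cons_cons_iff (h0 : 0 ≤ h) (a b : Bool) (r : List Bool) :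
    (∀ k, 0 ≤ h + heightAt (a :: b :: r) k) ↔
      0 ≤ h + step a ∧ ∀ k, 0 ≤ h + step a + step b + heightAt r k := by
  constructor
  · intro H
    refine ⟨by simpa using H 1, fun k => ?_⟩
    linarith [H (k + 2), heightAt_cons_succ a (b :: r) (k + 1), heightAt_cons_succ b r k]
  · rintro ⟨h1, H⟩ (_ | _ | k)
    · simpa using h0
    · simpa using h1
    · simp only [heightAt_cons_succ]; linarith [H k]

lemma noEvenTurn_cons_cons_iff (he : Even h) (a b : Bool) (r : List Bool) :
    NoEvenTurn h (a :: b :: r) ↔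
      (∀ x, r[0]? = some x → 0 < h + step a + step b → x = b) ∧
        NoEvenTurn (h + step a + step b) r := by
  have hodd : Odd (h + step a) := he.add_odd (odd_step a)
  have heven : Even (h + step a + step b) := hodd.add_odd (odd_step b)
  constructor
  · intro H
    refine ⟨fun x hx hpos => ?_, fun i x y hx hy hxy hpos => ?_⟩
    · by_contra hxb
      exact H 1 b x rfl (by simpa using hx) (Ne.symm hxb) (by simpa [← add_assoc] using hpos)
        (by simpa [← add_assoc] using heven)
    · have := H (i + 2) x y (by simpa using hx) (by simpa using hy) hxy
      simp only [heightAt_cons_succ, ← add_assoc] at this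
      exact this hpos
  · rintro ⟨H₁, H₂⟩ (_ | _ | i) x y hx hy hxy hpos
    · simpa [Int.not_even_iff_odd] using hodd
    · simp only [List.getElem?_cons_succ, List.getElem?_cons_zero, Option.some.injEq,
        heightAt_cons_succ, heightAt_zero] at hx hy hpos
      subst hx
      exact absurd (H₁ y hy (by linarith)).symm hxy
    · have := H₂ i x y (by simpa using hx) (by simpa using hy) hxy
      simp only [heightAt_cons_succ, ← add_assoc] at hpos ⊢
      exact this hpos

lemma nonneg_and_head_iff (he : Even h) (h0 : 0 ≤ h) (d a : Bool) :
    (0 ≤ h + step a ∧ (0 < h → a = d)) ↔ a = forcedStep d h := by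
  obtain ⟨g, rfl⟩ := he
  unfold forcedStep
  split_ifs <;> cases a <;> cases d <;> simp <;> omega

lemma isGoodTail_cons_cons_iff (he : Even h) (h0 : 0 ≤ h) (d a b : Bool) (r : List Bool) :
    IsGoodTail d h (a :: b :: r) ↔
      a = forcedStep d h ∧ IsGoodTail b (h + step a + step b) r := by
  rw [IsGoodTail, IsGoodTail, forall_nonneg_heightAt_cons_cons_iff h0, noEvenTurn_cons_cons_iff he,
    ← nonneg_and_head_iff he h0]
  simp only [stepSum_cons, List.getElem?_cons_zero, Option.some.injEq, forall_eq', add_assoc]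
  tauto

lemma isGoodTail_nil_iff (h0 : 0 ≤ h) (d : Bool) : IsGoodTail d h [] ↔ h = 0 := by
  simp [IsGoodTail, NoEvenTurn, heightAt_eq_stepSum_take, h0]

lemma not_isGoodTail_singleton (he : Even h) (d a : Bool) : ¬ IsGoodTail d h [a] := by
  rintro ⟨-, hret, -⟩
  have : Odd (h + step a) := he.add_odd (odd_step a)
  simp_all

lemma even_and_nonneg_of_forcedStep (he : Even h) (h0 : 0 ≤ h) (d t : Bool) :
    Even (h + step (forcedStep d h) + step t) ∧ 0 ≤ h + step (forcedStep d h) + step t := by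
  refine ⟨(he.add_odd (odd_step _)).add_odd (odd_step t), ?_⟩
  obtain ⟨g, rfl⟩ := he
  unfold forcedStep
  split_ifs <;> cases d <;> cases t <;> simp <;> omega

lemma isGoodTail_expand_iff (s : List Bool) {d : Bool} (he : Even h) (h0 : 0 ≤ h) :
    IsGoodTail d h (expand d h s) ↔ h + stepSum (expand d h s) = 0 := by
  induction s generalizing d h with
  | nil => simp [expand, isGoodTail_nil_iff h0]
  | cons t s ih =>
    obtain ⟨he', h0'⟩ := even_and_nonneg_of_forcedStep he h0 d t
    rw [expand, isGoodTail_cons_cons_iff he h0, ih he' h0']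
    simp only [stepSum_cons, true_and, add_assoc]

lemma expand_secondSteps {d : Bool} {p : List Bool} (he : Even h) (h0 : 0 ≤ h)
    (hp : IsGoodTail d h p) : expand d h (secondSteps p) = p := by
  induction p using secondSteps.induct generalizing d h with
  | case1 => rfl
  | case2 a => exact absurd hp (not_isGoodTail_singleton he d a)
  | case3 a b r ih =>
    obtain ⟨rfl, hr⟩ := (isGoodTail_cons_cons_iff he h0 d _ b r).mp hp
    obtain ⟨he', h0'⟩ := even_and_nonneg_of_forcedStep he h0 d b
    simp only [secondSteps, expand, ih he' h0' hr]

lemma noEvenTurn_zero_iff (p : List Bool) :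
    NoEvenTurn 0 p ↔ ∀ h : ℤ, 0 < h → Even h → ¬ HasPeakAt p h ∧ ¬ HasValleyAt p h := by
  simp only [NoEvenTurn, HasPeakAt, HasValleyAt, zero_add]
  constructor
  · intro H h hpos hev
    constructor <;> rintro ⟨i, hx, hy, rfl⟩
    exacts [H i _ _ hx hy (by decide) hpos hev, H i _ _ hx hy (by decide) hpos hev]
  · intro H i x y hx hy hxy hpos hev
    cases x <;> cases y <;> simp only [ne_eq, not_true_eq_false] at hxy
    exacts [(H _ hpos hev).2 ⟨i, hx, hy, rfl⟩, (H _ hpos hev).1 ⟨i, hx, hy, rfl⟩]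

lemma isGoodTail_true_zero_iff (p : List Bool) :
    IsGoodTail true 0 p ↔
      IsDyck p ∧ ∀ h : ℤ, 0 < h → Even h → ¬ HasPeakAt p h ∧ ¬ HasValleyAt p h := by
  simp only [IsGoodTail, IsDyck, noEvenTurn_zero_iff, zero_add, heightAt_length, lt_irrefl,
    IsEmpty.forall_iff, implies_true, and_true, and_assoc]

end PairDecomposition

section Return

def NegSuffixes (s : List Bool) : Prop := ∀ u, u <:+ s → u ≠ [] → stepSum u < 0

def returnBound (d : Bool) (h : ℤ) : ℤ := h / 2 + if h ≠ 0 ∧ d then 1 else 0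

variable {h : ℤ}

lemma negSuffixes_cons_iff (t : Bool) (s : List Bool) :
    NegSuffixes (t :: s) ↔ step t + stepSum s < 0 ∧ NegSuffixes s := by
  simp only [NegSuffixes, List.suffix_cons_iff, or_imp, forall_and, forall_eq, stepSum_cons]
  simp

lemma stepSum_nonpos_of_negSuffixes {s : List Bool} (hs : NegSuffixes s) : stepSum s ≤ 0 := by
  rcases eq_or_ne s [] with rfl | hne
  · rfl
  · exact (hs s List.suffix_rfl hne).le

lemma le_neg_returnBound_forcedStep_iff (he : Even h) (h0 : 0 ≤ h) (d t : Bool) (A : ℤ) :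
    A ≤ -returnBound t (h + step (forcedStep d h) + step t) ↔
      step t + A < 0 ∧ step t + A ≤ -returnBound d h := by
  obtain ⟨g, rfl⟩ := he
  unfold returnBound forcedStep
  split_ifs <;> cases d <;> cases t <;> simp_all <;> omega

lemma add_stepSum_expand_eq_zero_iff (s : List Bool) {d : Bool} (he : Even h) (h0 : 0 ≤ h) :
    h + stepSum (expand d h s) = 0 ↔ NegSuffixes s ∧ stepSum s ≤ -returnBound d h := by
  induction s generalizing d h with
  | nil =>
    obtain ⟨g, rfl⟩ := he
    simp only [expand, stepSum_nil, add_zero, returnBound]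
    split_ifs <;> simp [NegSuffixes] <;> omega
  | cons t s ih =>
    obtain ⟨he', h0'⟩ := even_and_nonneg_of_forcedStep he h0 d t
    rw [expand, stepSum_cons, stepSum_cons, ← add_assoc, ← add_assoc, ih he' h0',
      negSuffixes_cons_iff, stepSum_cons, le_neg_returnBound_forcedStep_iff he h0]
    tauto

lemma stepSum_expand_eq_zero_iff (s : List Bool) :
    stepSum (expand true 0 s) = 0 ↔ NegSuffixes s := by
  have := add_stepSum_expand_eq_zero_iff s (d := true) Even.zero le_rfl
  simp only [zero_add, returnBound, ne_eq, not_true_eq_false, false_and, if_false,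
    EuclideanDomain.zero_div, neg_zero] at this
  rw [this]
  exact and_iff_left_of_imp stepSum_nonpos_of_negSuffixes

end Return

lemma goodPaths_eq_image_expand (m : ℕ) :
    {p : List Bool | p.length = 2 * m ∧ IsDyck p ∧
        ∀ h : ℤ, 0 < h → Even h → ¬ HasPeakAt p h ∧ ¬ HasValleyAt p h} =
      expand true 0 '' {s | s.length = m ∧ NegSuffixes s} := by
  ext p
  simp only [Set.mem_ofPred_eq, Set.mem_image, ← isGoodTail_true_zero_iff]
  constructor
  · rintro ⟨hlen, hp⟩
    have hexp := expand_secondSteps Even.zero le_rfl hp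
    refine ⟨secondSteps p, ⟨?_, ?_⟩, hexp⟩
    · have := length_expand true 0 (secondSteps p)
      rw [hexp] at this
      omega
    · rw [← stepSum_expand_eq_zero_iff, hexp]
      simpa using hp.2.1
  · rintro ⟨s, ⟨rfl, hs⟩, rfl⟩
    exact ⟨length_expand _ _ _, (isGoodTail_expand_iff s Even.zero le_rfl).mpr
      (by simpa [stepSum_expand_eq_zero_iff] using hs)⟩

section Reversal

def NonposPrefixes (w : List Bool) : Prop := ∀ u, u <+: w → stepSum u ≤ 0

def nonposWalks (L : ℕ) : Set (List Bool) := {w | w.length = L ∧ NonposPrefixes w}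

lemma negSuffixes_reverse_append_false_iff (w : List Bool) :
    NegSuffixes (w.reverse ++ [false]) ↔ NonposPrefixes w := by
  rw [← List.reverse_cons]
  constructor
  · intro H v hv
    have := H (false :: v).reverse (List.reverse_prefix.mp (by simpa using hv)) (by simp)
    simp only [stepSum_reverse, stepSum_cons, step_false] at this
    omega
  · intro H u hu hne
    rw [← List.reverse_prefix, List.reverse_reverse, List.prefix_cons_iff] at hu
    rcases hu with hu | ⟨t, hu, ht⟩
    · simp_all
    · rw [← stepSum_reverse, hu, stepSum_cons, step_false]
      linarith [H t ht]

lemma reverse_append_false_injective : Function.Injective fun w : List Bool => w.reverse ++ [false] :=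
  (List.append_left_injective _).comp List.reverse_injective

lemma negSuffixWords_succ_eq_image (L : ℕ) :
    {s : List Bool | s.length = L + 1 ∧ NegSuffixes s} =
      (fun w => w.reverse ++ [false]) '' nonposWalks L := by
  ext s
  constructor
  · rintro ⟨hlen, hs⟩
    rcases s.eq_nil_or_concat' with rfl | ⟨u, t, rfl⟩
    · simp at hlen
    have ht : t = false := by
      have := hs [t] (List.suffix_append u [t]) (by simp)
      cases t <;> simp_all
    subst ht
    refine ⟨u.reverse, ⟨by simpa using hlen, ?_⟩, by simp⟩
    rw [← negSuffixes_reverse_append_false_iff, List.reverse_reverse]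
    exact hs
  · rintro ⟨w, ⟨hlen, hw⟩, rfl⟩
    exact ⟨by simp [hlen], (negSuffixes_reverse_append_false_iff w).mpr hw⟩

end Reversal

section Counting

def nonposExcursions (L : ℕ) : Set (List Bool) := {w ∈ nonposWalks L | stepSum w = 0}

lemma nonposWalks_finite (L : ℕ) : (nonposWalks L).Finite :=
  (List.finite_length_eq Bool L).subset fun _ hw => hw.1

lemma stepSum_nonpos_of_nonposPrefixes {w : List Bool} (hw : NonposPrefixes w) : stepSum w ≤ 0 :=
  hw w List.prefix_rfl

lemma nonposPrefixes_concat_iff (w : List Bool) (t : Bool) :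
    NonposPrefixes (w ++ [t]) ↔ stepSum w + step t ≤ 0 ∧ NonposPrefixes w := by
  simp only [NonposPrefixes, List.prefix_concat_iff, or_imp, forall_and, forall_eq, stepSum_append,
    stepSum_cons, stepSum_nil, add_zero]

lemma nonposWalks_zero : nonposWalks 0 = {[]} := by
  ext w
  simp only [nonposWalks, Set.mem_ofPred_eq, List.length_eq_zero_iff, Set.mem_singleton_iff,
    and_iff_left_iff_imp]
  rintro rfl u hu
  rw [List.prefix_nil.mp hu, stepSum_nil]

lemma nonposWalks_succ (L : ℕ) :
    nonposWalks (L + 1) = (· ++ [false]) '' nonposWalks L ∪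
      (· ++ [true]) '' {w ∈ nonposWalks L | stepSum w < 0} := by
  ext w
  rcases w.eq_nil_or_concat' with rfl | ⟨u, t, rfl⟩
  · simp [nonposWalks]
  · have := @stepSum_nonpos_of_nonposPrefixes u
    cases t <;> simp [nonposWalks, nonposPrefixes_concat_iff] <;> grind

lemma ncard_nonposWalks_succ_add_ncard_nonposExcursions (L : ℕ) :
    (nonposWalks (L + 1)).ncard + (nonposExcursions L).ncard = 2 * (nonposWalks L).ncard := by
  have hneg : {w ∈ nonposWalks L | stepSum w < 0} = nonposWalks L \ nonposExcursions L := by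
    ext w
    have := @stepSum_nonpos_of_nonposPrefixes w
    simp only [nonposExcursions, nonposWalks, Set.mem_sdiff, Set.mem_ofPred_eq]
    grind
  have hdisj : Disjoint ((· ++ [false]) '' nonposWalks L)
      ((· ++ [true]) '' {w ∈ nonposWalks L | stepSum w < 0}) := by
    rw [Set.disjoint_left]
    rintro _ ⟨u, -, rfl⟩ ⟨v, -, huv⟩
    simpa using congrArg List.getLast? huv
  rw [nonposWalks_succ, Set.ncard_union_eq hdisj ((nonposWalks_finite L).image _)
    (((nonposWalks_finite L).subset fun _ hw => hw.1).image _),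
    Set.ncard_image_of_injective _ (List.append_left_injective _),
    Set.ncard_image_of_injective _ (List.append_left_injective _), hneg, add_assoc,
    Set.ncard_sdiff_add_ncard_of_subset (fun _ hw => hw.1) (nonposWalks_finite L), two_mul]

lemma nonposExcursions_eq_empty_of_odd {L : ℕ} (hL : Odd L) : nonposExcursions L = ∅ := by
  refine Set.eq_empty_of_forall_notMem ?_
  rintro w ⟨⟨hlen, -⟩, hsum⟩
  have := stepSum_eq_two_mul_count_sub_length w
  obtain ⟨k, rfl⟩ := hL
  omega

def boolEquivDyckStep : Bool ≃ DyckStep where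
  toFun b := if b then D else U
  invFun s := decide (s = D)
  left_inv b := by cases b <;> rfl
  right_inv s := by cases s <;> rfl

lemma stepSum_map_boolEquivDyckStep_symm (l : List DyckStep) :
    stepSum (l.map boolEquivDyckStep.symm) = (l.count D : ℤ) - l.count U := by
  rw [stepSum, show true = boolEquivDyckStep.symm D from rfl,
    show false = boolEquivDyckStep.symm U from rfl,
    List.count_map_of_injective _ _ boolEquivDyckStep.symm.injective,
    List.count_map_of_injective _ _ boolEquivDyckStep.symm.injective]

lemma nonposExcursions_two_mul_eq_range (n : ℕ) :
    nonposExcursions (2 * n) = Set.range fun p : {p : DyckWord // p.semilength = n} =>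
      p.1.toList.map boolEquivDyckStep.symm := by
  ext w
  constructor
  · rintro ⟨⟨hlen, hw⟩, hsum⟩
    set l := w.map boolEquivDyckStep
    have hwl : l.map boolEquivDyckStep.symm = w := by simp [l]
    have hU : l.count U = l.count D := by
      rw [← hwl, stepSum_map_boolEquivDyckStep_symm] at hsum
      omega
    have hD (i : ℕ) : (l.take i).count D ≤ (l.take i).count U := by
      have := hw _ (List.take_prefix i w)
      rw [← hwl, ← List.map_take, stepSum_map_boolEquivDyckStep_symm] at this
      omega
    let p : DyckWord := ⟨l, hU, hD⟩
    have hp : 2 * p.semilength = 2 * n := by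
      rw [DyckWord.two_mul_semilength_eq_length, ← hlen, List.length_map]
    exact ⟨⟨p, by omega⟩, hwl⟩
  · rintro ⟨⟨p, hp⟩, rfl⟩
    refine ⟨⟨?_, fun u hu => ?_⟩, ?_⟩
    · rw [List.length_map, ← DyckWord.two_mul_semilength_eq_length, hp]
    · rw [List.prefix_iff_eq_take] at hu
      rw [hu, ← List.map_take, stepSum_map_boolEquivDyckStep_symm]
      linarith [p.count_D_le_count_U u.length]
    · rw [stepSum_map_boolEquivDyckStep_symm, p.count_U_eq_count_D, sub_self]

lemma ncard_nonposExcursions_two_mul (n : ℕ) : (nonposExcursions (2 * n)).ncard = catalan n := by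
  rw [nonposExcursions_two_mul_eq_range, Set.ncard_range_of_injective, Nat.card_eq_fintype_card,
    DyckWord.card_dyckWord_semilength_eq_catalan]
  exact fun p q hpq => Subtype.ext <| DyckWord.ext <|
    List.map_injective_iff.mpr boolEquivDyckStep.symm.injective hpq

lemma ncard_nonposWalks_two_mul (n : ℕ) : (nonposWalks (2 * n)).ncard = n.centralBinom := by
  induction n with
  | zero => simp [nonposWalks_zero]
  | succ n ih =>
    have hodd := ncard_nonposWalks_succ_add_ncard_nonposExcursions (2 * n + 1)
    have heven := ncard_nonposWalks_succ_add_ncard_nonposExcursions (2 * n)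
    rw [nonposExcursions_eq_empty_of_odd (odd_two_mul_add_one n), Set.ncard_empty] at hodd
    rw [ncard_nonposExcursions_two_mul, ih] at heven
    have hcat := succ_mul_catalan_eq_centralBinom n
    have hcb := Nat.succ_mul_centralBinom_succ n
    refine Nat.eq_of_mul_eq_mul_left n.succ_pos ?_
    rw [show 2 * (n + 1) = 2 * n + 1 + 1 by ring]
    zify at *
    linear_combination (n + 1 : ℤ) * hodd + 2 * (n + 1 : ℤ) * heven - 2 * hcat - hcb

end Counting

end DyckEvenTurn

/-- The number of Dyck paths of semilength `2n+1` such that no peak and no valley occurs at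
a positive even height equals `C(2n, n)`. -/
theorem stmt7 (n : ℕ) :
    Set.ncard {p : List Bool | p.length = 2 * (2 * n + 1) ∧ IsDyck p ∧
        (∀ h : ℤ, 0 < h → Even h → ¬ HasPeakAt p h ∧ ¬ HasValleyAt p h)} =
      Nat.choose (2 * n) n := by
  rw [DyckEvenTurn.goodPaths_eq_image_expand,
    Set.ncard_image_of_injective _ (DyckEvenTurn.expand_injective true 0),
    DyckEvenTurn.negSuffixWords_succ_eq_image,
    Set.ncard_image_of_injective _ DyckEvenTurn.reverse_append_false_injective,
    DyckEvenTurn.ncard_nonposWalks_two_mul, Nat.centralBinom_eq_two_mul_choose]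
end

section
/- Let A and B be integers with 1 ≤ B < A, and let P be the generating function of the set of Dyck paths none of whose up-run lengths lies in the arithmetic progression {A·r + B : r ≥ 0}. Then, as formal power series, P = Σ_{0 ≤ k < A, k ≠ B} z^k·P^k + z^A·P^{A+1}. -/
/-!
A nonempty Dyck path factors uniquely as `U^k D α₁ D α₂ ⋯ D α_k` with Dyck paths `α_i`, where `k`
is the length of its first up-run; its up-runs are that first run together with the up-runs of
the `α_i`. So for a set `M ∌ 0` of forbidden run lengths, the generating function `P` of the paths
avoiding `M` satisfies `P = ∑_{k ∉ M} z^k P^k`, the sum converging coefficientwise. When `M` is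
invariant under `k ↦ k + A`, the terms with `k ≥ A` add up to `z^A P^A · P`.
-/

open PowerSeries DyckStep

theorem List.getElem?_append_cons_add {α : Type*} (a b : List α) (x : α) (j : ℕ) :
    (a ++ x :: b)[a.length + 1 + j]? = b[j]? := by
  simp [List.getElem?_append_right, add_assoc, add_comm 1 j]

theorem Nat.card_eq_sum_card_fiberwise {α : Type*} {P : α → Prop} [Finite {x // P x}]
    (f : α → ℕ) (s : Finset ℕ) (hs : ∀ x, P x → f x ∈ s) :
    Nat.card {x // P x} = ∑ k ∈ s, Nat.card {x // P x ∧ f x = k} := by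
  have (k : ℕ) : Finite {x // P x ∧ f x = k} :=
    Finite.of_injective (fun x => (⟨x.1, x.2.1⟩ : {x // P x}))
      fun _ _ h => Subtype.ext (Subtype.mk.inj h)
  rw [← Finset.sum_coe_sort, ← Nat.card_sigma]
  exact Nat.card_congr
    { toFun := fun x => ⟨⟨f x, hs x x.2⟩, ⟨x, x.2, rfl⟩⟩
      invFun := fun y => ⟨y.2, y.2.2.1⟩
      left_inv := fun _ => rfl
      right_inv := fun y => Sigma.subtype_ext (Subtype.ext y.2.2.2) rfl }

section UpRuns

open List

variable {m : ℕ} {a b : List Bool}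

theorem hasUpRun_replicate_true (hm : m ≠ 0) (k : ℕ) :
    HasUpRun (replicate k true) m ↔ m = k := by
  constructor
  · rintro ⟨i, hrun, hleft, hright⟩
    have hik : i < k := by simpa [getElem?_replicate] using hrun 0 (by omega)
    simp only [getElem?_replicate, length_replicate] at hleft hright
    split_ifs at hleft hright <;> simp_all
  · rintro rfl
    exact ⟨0, fun j hj => by simp [hj], .inl rfl, .inr (by simp)⟩

theorem HasUpRun.append_false_cons_left (h : HasUpRun a m) (b : List Bool) :
    HasUpRun (a ++ false :: b) m := by
  obtain ⟨i, hrun, hl, hr⟩ := h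
  have him : i + m ≤ a.length := by
    rcases hr with hr | hr
    · exact (List.getElem?_eq_some_iff.mp hr).1.le
    · omega
  refine ⟨i, fun j hj => ?_, ?_, ?_⟩
  · rw [getElem?_append_left (by omega)]
    exact hrun j hj
  · rcases hl with hl | hl
    · exact .inl hl
    · exact .inr (by rwa [getElem?_append_left (List.getElem?_eq_some_iff.mp hl).1])
  · rcases him.lt_or_eq with him | him
    · rcases hr with hr | hr
      · exact .inl (by rwa [getElem?_append_left him])
      · omega
    · exact .inl (by simp [him])

theorem HasUpRun.append_false_cons_right (h : HasUpRun b m) (a : List Bool) :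
    HasUpRun (a ++ false :: b) m := by
  obtain ⟨j, hrun, hl, hr⟩ := h
  refine ⟨a.length + 1 + j, fun l hl => ?_, .inr ?_, ?_⟩
  · rw [add_assoc, getElem?_append_cons_add]
    exact hrun l hl
  · rcases j with _ | j
    · simp
    · rcases hl with hl | hl
      · omega
      · rwa [show a.length + 1 + (j + 1) - 1 = a.length + 1 + j by omega,
          getElem?_append_cons_add]
  · rcases hr with hr | hr
    · exact .inl (by rwa [add_assoc, getElem?_append_cons_add])
    · exact .inr (by simp; omega)

theorem HasUpRun.of_append_false_cons (hm : m ≠ 0) (h : HasUpRun (a ++ false :: b) m) :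
    HasUpRun a m ∨ HasUpRun b m := by
  obtain ⟨i, hrun, hl, hr⟩ := h
  by_cases hi : i ≤ a.length
  · have him : i + m ≤ a.length := by
      by_contra h
      simpa [show i + (a.length - i) = a.length by omega] using hrun (a.length - i) (by omega)
    refine .inl ⟨i, fun j hj => ?_, ?_, ?_⟩
    · rw [← getElem?_append_left (by omega)]
      exact hrun j hj
    · rcases hl with hl | hl
      · exact .inl hl
      · exact .inr (by rwa [getElem?_append_left (by omega)] at hl)
    · rcases him.lt_or_eq with him | him
      · rcases hr with hr | hr
        · exact .inl (by rwa [getElem?_append_left him] at hr)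
        · simp at hr; omega
      · exact .inr him
  · obtain ⟨j, rfl⟩ : ∃ j, i = a.length + 1 + j := ⟨i - a.length - 1, by omega⟩
    refine .inr ⟨j, fun l hl => ?_, ?_, ?_⟩
    · rw [← getElem?_append_cons_add a b false, ← add_assoc]
      exact hrun l hl
    · rcases j with _ | j
      · exact .inl rfl
      · rcases hl with hl | hl
        · omega
        · rw [show a.length + 1 + (j + 1) - 1 = a.length + 1 + j by omega,
            getElem?_append_cons_add] at hl
          exact .inr (by simpa using hl)
    · rcases hr with hr | hr
      · exact .inl (by rwa [add_assoc, getElem?_append_cons_add] at hr)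
      · simp at hr; exact .inr (by omega)

theorem hasUpRun_append_false_cons (hm : m ≠ 0) :
    HasUpRun (a ++ false :: b) m ↔ HasUpRun a m ∨ HasUpRun b m :=
  ⟨HasUpRun.of_append_false_cons hm, fun h => h.elim (·.append_false_cons_left b)
    (·.append_false_cons_right a)⟩

theorem hasUpRun_append_flatMap (hm : m ≠ 0) (a : List Bool) (ls : List (List Bool)) :
    HasUpRun (a ++ ls.flatMap (false :: ·)) m ↔ HasUpRun a m ∨ ∃ b ∈ ls, HasUpRun b m := by
  induction ls generalizing a with
  | nil => simp
  | cons b ls ih =>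
    rw [flatMap_cons, cons_append, hasUpRun_append_false_cons hm, ih]
    simp

end UpRuns

def DyckStep.toBool : DyckStep → Bool
  | U => true
  | D => false

theorem DyckStep.toBool_injective : Function.Injective DyckStep.toBool := by
  intro s t
  cases s <;> cases t <;> simp [DyckStep.toBool]

theorem heightAt_map_toBool (l : List DyckStep) (k : ℕ) :
    heightAt (l.map DyckStep.toBool) k = ((l.take k).count U : ℤ) - (l.take k).count D := by
  rw [heightAt, ← List.map_take]
  exact congrArg₂ (fun a b : ℕ => (a : ℤ) - b)
    (List.count_map_of_injective _ _ DyckStep.toBool_injective U)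
    (List.count_map_of_injective _ _ DyckStep.toBool_injective D)

namespace DyckWord

def toPath (p : DyckWord) : List Bool := p.toList.map DyckStep.toBool

theorem toPath_injective : Function.Injective toPath := fun _ _ h =>
  DyckWord.ext (List.map_injective_iff.mpr DyckStep.toBool_injective h)

theorem length_toPath (p : DyckWord) : p.toPath.length = 2 * p.semilength := by
  simp [toPath]

theorem toPath_nest_add (p q : DyckWord) :
    (p.nest + q).toPath = true :: (p.toPath ++ false :: q.toPath) := by
  change (([U] ++ p.toList ++ [D]) ++ q.toList).map DyckStep.toBool = _
  simp [toPath, DyckStep.toBool]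

theorem isDyck_toPath (p : DyckWord) : IsDyck p.toPath := by
  refine ⟨fun k => ?_, ?_⟩
  · rw [toPath, heightAt_map_toBool]
    exact sub_nonneg.mpr (by exact_mod_cast p.count_D_le_count_U k)
  · rw [toPath, heightAt_map_toBool, List.length_map, List.take_length, p.count_U_eq_count_D,
      sub_self]

theorem exists_toPath_eq_of_isDyck {l : List Bool} (hl : IsDyck l) :
    ∃ p : DyckWord, p.toPath = l := by
  obtain ⟨s, rfl⟩ : ∃ s : List DyckStep, s.map DyckStep.toBool = l :=
    ⟨l.map fun b => if b then U else D, by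
      rw [List.map_map]
      convert l.map_id
      funext b
      cases b <;> rfl⟩
  refine ⟨⟨s, ?_, fun k => ?_⟩, rfl⟩
  · have := hl.2
    rw [heightAt_map_toBool, List.length_map, List.take_length] at this
    omega
  · have := hl.1 k
    rw [heightAt_map_toBool] at this
    omega

/-- `firstRunJoin [α₁, …, α_k]` is the Dyck word `U^k D α₁ D α₂ ⋯ D α_k`. -/
def firstRunJoin (l : List DyckWord) : DyckWord := l.foldl (fun p q => p.nest + q) 0

theorem firstRunJoin_append_singleton (l : List DyckWord) (q : DyckWord) :
    firstRunJoin (l ++ [q]) = (firstRunJoin l).nest + q := by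
  simp [firstRunJoin]

def firstRunSplit (p : DyckWord) : List DyckWord :=
  if _ : p = 0 then [] else firstRunSplit p.insidePart ++ [p.outsidePart]
termination_by p.semilength
decreasing_by exact semilength_insidePart_lt ‹_›

theorem firstRunSplit_firstRunJoin (l : List DyckWord) :
    firstRunSplit (firstRunJoin l) = l := by
  induction l using List.reverseRecOn with
  | nil => simp [firstRunJoin, firstRunSplit]
  | append_singleton l q ih =>
    have hne : (firstRunJoin l).nest + q ≠ 0 := by simp
    rw [firstRunJoin_append_singleton, firstRunSplit, dif_neg hne, insidePart_add nest_ne_zero,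
      outsidePart_add nest_ne_zero, insidePart_nest, outsidePart_nest, zero_add, ih]

theorem firstRunJoin_firstRunSplit (p : DyckWord) : firstRunJoin (firstRunSplit p) = p := by
  induction p using firstRunSplit.induct with
  | case1 => simp [firstRunSplit, firstRunJoin]
  | case2 p hp ih =>
    rw [firstRunSplit, dif_neg hp, firstRunJoin_append_singleton, ih,
      nest_insidePart_add_outsidePart hp]

def firstRunEquiv : List DyckWord ≃ DyckWord :=
  ⟨firstRunJoin, firstRunSplit, firstRunSplit_firstRunJoin, firstRunJoin_firstRunSplit⟩

theorem semilength_firstRunJoin (l : List DyckWord) :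
    (firstRunJoin l).semilength = l.length + (l.map semilength).sum := by
  induction l using List.reverseRecOn with
  | nil => rfl
  | append_singleton l q ih =>
    simp only [firstRunJoin_append_singleton, semilength_add, semilength_nest, ih]
    simp
    omega

theorem toPath_firstRunJoin (l : List DyckWord) :
    (firstRunJoin l).toPath =
      List.replicate l.length true ++ (l.map toPath).flatMap (false :: ·) := by
  induction l using List.reverseRecOn with
  | nil => rfl
  | append_singleton l q ih =>
    rw [firstRunJoin_append_singleton, toPath_nest_add, ih]
    simp [List.replicate_succ]

theorem hasUpRun_toPath_firstRunJoin {m : ℕ} (hm : m ≠ 0) (l : List DyckWord) :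
    HasUpRun (firstRunJoin l).toPath m ↔ m = l.length ∨ ∃ p ∈ l, HasUpRun p.toPath m := by
  rw [toPath_firstRunJoin, hasUpRun_append_flatMap hm, hasUpRun_replicate_true hm]
  simp

theorem finite_of_length_add_sum_eq {R : List DyckWord → Prop} {n : ℕ}
    (h : ∀ l, R l → l.length + (l.map semilength).sum = n) : Finite {l // R l} :=
  Finite.of_injective
    (fun l => (⟨firstRunJoin l.1, (semilength_firstRunJoin _).trans (h _ l.2)⟩ :
      {p : DyckWord // p.semilength = n}))
    fun _ _ h => Subtype.ext (firstRunEquiv.injective (Subtype.mk.inj h))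

end DyckWord

open DyckWord

theorem coeff_genFun (Q : List Bool → Prop) (n : ℕ) :
    coeff n (genFun Q) = Nat.card {p : DyckWord // p.semilength = n ∧ Q p.toPath} := by
  have hset : {l : List Bool | l.length = 2 * n ∧ IsDyck l ∧ Q l} =
      toPath '' {p | p.semilength = n ∧ Q p.toPath} := by
    ext l
    constructor
    · rintro ⟨hlen, hl, hQ⟩
      obtain ⟨p, rfl⟩ := exists_toPath_eq_of_isDyck hl
      exact ⟨p, ⟨by rw [length_toPath] at hlen; omega, hQ⟩, rfl⟩
    · rintro ⟨p, ⟨hn, hQ⟩, rfl⟩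
      exact ⟨by rw [length_toPath, hn], isDyck_toPath p, hQ⟩
  rw [genFun, coeff_mk, hset, Set.ncard_image_of_injective _ toPath_injective]
  rfl

theorem coeff_genFun_pow (Q : List Bool → Prop) (k m : ℕ) :
    coeff m (genFun Q ^ k) = Nat.card {l : List DyckWord //
      l.length = k ∧ (∀ p ∈ l, Q p.toPath) ∧ (l.map semilength).sum = m} := by
  induction k generalizing m with
  | zero =>
    rw [pow_zero, coeff_one]
    split_ifs with hm
    · subst hm
      symm
      rw [Nat.card_eq_one_iff_exists]
      exact ⟨⟨[], by simp⟩, fun ⟨l, hl, _⟩ => Subtype.ext (List.length_eq_zero_iff.mp hl)⟩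
    · have : IsEmpty {l : List DyckWord //
          l.length = 0 ∧ (∀ p ∈ l, Q p.toPath) ∧ (l.map semilength).sum = m} :=
        ⟨fun ⟨l, hl, _, hs⟩ => hm (by simp [List.length_eq_zero_iff.mp hl] at hs; omega)⟩
      rw [Nat.card_of_isEmpty]
  | succ k ih =>
    have := finite_of_length_add_sum_eq (n := k + 1 + m) (R := fun l =>
      l.length = k + 1 ∧ (∀ p ∈ l, Q p.toPath) ∧ (l.map semilength).sum = m)
      fun l hl => by rw [hl.1, hl.2.2]
    rw [pow_succ', coeff_mul, Finset.Nat.sum_antidiagonal_eq_sum_range_succ_mk,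
      Nat.card_eq_sum_card_fiberwise (fun l => (l.headD 0).semilength) (Finset.range (m + 1))]
    · refine Finset.sum_congr rfl fun a ha => ?_
      rw [coeff_genFun, ih, ← Nat.card_prod]
      have ham : a ≤ m := Nat.lt_succ_iff.mp (Finset.mem_range.mp ha)
      refine Nat.card_eq_of_bijective (fun x => ⟨x.1.1 :: x.2.1,
        ⟨by simp [x.2.2.1], List.forall_mem_cons.mpr ⟨x.1.2.2, x.2.2.2.1⟩,
          by simp [x.1.2.1, x.2.2.2.2]; omega⟩, by simp [x.1.2.1]⟩) ⟨?_, ?_⟩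
      · rintro ⟨⟨p, hp⟩, ⟨l, hl⟩⟩ ⟨⟨p', hp'⟩, ⟨l', hl'⟩⟩ h
        obtain ⟨rfl, rfl⟩ : p = p' ∧ l = l' := by simpa using h
        rfl
      · rintro ⟨_ | ⟨p, l⟩, ⟨hlen, hQ, hsum⟩, hhead⟩
        · simp at hlen
        · simp only [List.headD_cons] at hhead
          simp only [List.map_cons, List.sum_cons, hhead] at hsum
          exact ⟨(⟨p, hhead, hQ p List.mem_cons_self⟩, ⟨l, by simpa using hlen,
            fun q hq => hQ q (List.mem_cons_of_mem _ hq), by omega⟩), rfl⟩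
    · rintro (_ | ⟨p, l⟩) ⟨hlen, -, hsum⟩
      · simp at hlen
      · simp at hsum ⊢; omega

/-- Every Dyck path has an up-run of length `0` (the empty block after its last step), so only
sets `M ∌ 0` are of interest. -/
def AvoidsUpRuns (M : Set ℕ) (l : List Bool) : Prop := ∀ m ∈ M, ¬ HasUpRun l m

section AvoidingUpRuns

variable {M : Set ℕ}

theorem DyckWord.avoidsUpRuns_toPath_firstRunJoin (h0 : 0 ∉ M) (l : List DyckWord) :
    AvoidsUpRuns M (firstRunJoin l).toPath ↔
      l.length ∉ M ∧ ∀ p ∈ l, AvoidsUpRuns M p.toPath := by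
  have hrun {m} (hm : m ∈ M) := hasUpRun_toPath_firstRunJoin (ne_of_mem_of_not_mem hm h0) l
  constructor
  · intro h
    exact ⟨fun hk => h _ hk ((hrun hk).mpr (.inl rfl)),
      fun p hp m hm hp' => h m hm ((hrun hm).mpr (.inr ⟨p, hp, hp'⟩))⟩
  · rintro ⟨hk, hl⟩ m hm h
    rcases (hrun hm).mp h with rfl | ⟨p, hp, hp'⟩
    · exact hk hm
    · exact hl p hp m hm hp'

variable [DecidablePred (· ∈ M)]

theorem coeff_genFun_avoidsUpRuns (h0 : 0 ∉ M) (n : ℕ) :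
    coeff n (genFun (AvoidsUpRuns M)) = ∑ k ∈ (Finset.range (n + 1)).filter (· ∉ M),
      coeff (n - k) (genFun (AvoidsUpRuns M) ^ k) := by
  have := finite_of_length_add_sum_eq (n := n) (R := fun l =>
    l.length + (l.map semilength).sum = n ∧ l.length ∉ M ∧ ∀ p ∈ l, AvoidsUpRuns M p.toPath)
    fun _ h => h.1
  rw [coeff_genFun, ← Nat.card_congr (firstRunEquiv.subtypeEquiv fun l => by
      rw [firstRunEquiv, Equiv.coe_fn_mk, semilength_firstRunJoin,
        avoidsUpRuns_toPath_firstRunJoin h0]),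
    Nat.card_eq_sum_card_fiberwise List.length]
  · refine Finset.sum_congr rfl fun k hk => ?_
    rw [coeff_genFun_pow]
    refine Nat.card_congr (Equiv.subtypeEquivRight fun l => ?_)
    simp only [Finset.mem_filter, Finset.mem_range] at hk
    constructor
    · rintro ⟨⟨hlen, -, hl⟩, rfl⟩
      exact ⟨rfl, hl, by omega⟩
    · rintro ⟨rfl, hl, hsum⟩
      exact ⟨⟨by omega, hk.2, hl⟩, rfl⟩
  · rintro l ⟨hlen, hM, -⟩
    simp only [Finset.mem_filter, Finset.mem_range]
    exact ⟨by omega, hM⟩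

theorem coeff_genFun_avoidsUpRuns_eq_coeff_sum (h0 : 0 ∉ M) {n N : ℕ} (hn : n < N) :
    coeff n (genFun (AvoidsUpRuns M)) = coeff n (∑ k ∈ (Finset.range N).filter (· ∉ M),
      X ^ k * genFun (AvoidsUpRuns M) ^ k) := by
  simp only [coeff_genFun_avoidsUpRuns h0, map_sum, coeff_X_pow_mul']
  rw [← Finset.sum_filter]
  refine Finset.sum_congr ?_ fun _ _ => rfl
  ext k
  simp only [Finset.mem_filter, Finset.mem_range]
  constructor
  · rintro ⟨hk, hkM⟩
    exact ⟨⟨by omega, hkM⟩, by omega⟩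
  · rintro ⟨⟨-, hkM⟩, hk⟩
    exact ⟨by omega, hkM⟩

theorem sum_filter_range_add_of_periodic {R : Type*} [CommSemiring R] {A : ℕ}
    (hper : ∀ k, A + k ∈ M ↔ k ∈ M) (x y : R) (N : ℕ) :
    ∑ k ∈ (Finset.range (A + N)).filter (· ∉ M), x ^ k * y ^ k =
      ∑ k ∈ (Finset.range A).filter (· ∉ M), x ^ k * y ^ k +
        x ^ A * y ^ A * ∑ k ∈ (Finset.range N).filter (· ∉ M), x ^ k * y ^ k := by
  simp only [Finset.sum_filter, Finset.sum_range_add, Finset.mul_sum, hper, pow_add]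
  congr 1
  refine Finset.sum_congr rfl fun k _ => ?_
  split_ifs <;> ring

theorem genFun_avoidsUpRuns_of_periodic (h0 : 0 ∉ M) {A : ℕ} (hper : ∀ k, A + k ∈ M ↔ k ∈ M) :
    genFun (AvoidsUpRuns M) = ∑ k ∈ (Finset.range A).filter (· ∉ M),
      X ^ k * genFun (AvoidsUpRuns M) ^ k + X ^ A * genFun (AvoidsUpRuns M) ^ (A + 1) := by
  ext n
  rw [coeff_genFun_avoidsUpRuns_eq_coeff_sum h0 (N := A + (n + 1)) (by omega),
    sum_filter_range_add_of_periodic hper, map_add, map_add, pow_succ, ← mul_assoc, coeff_mul,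
    coeff_mul]
  congr 1
  refine Finset.sum_congr rfl fun ij hij => ?_
  rw [Finset.HasAntidiagonal.mem_antidiagonal] at hij
  rw [← coeff_genFun_avoidsUpRuns_eq_coeff_sum h0 (by omega)]

end AvoidingUpRuns

theorem add_mem_range_mul_add_iff {A B : ℕ} (hBA : B < A) (k : ℕ) :
    A + k ∈ Set.range (fun r => A * r + B) ↔ k ∈ Set.range (fun r => A * r + B) := by
  simp only [Set.mem_range]
  constructor
  · rintro ⟨_ | r, hr⟩
    · simp at hr
      omega
    · exact ⟨r, by rw [Nat.mul_succ] at hr; linarith⟩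
  · rintro ⟨r, rfl⟩
    exact ⟨r + 1, by ring⟩

theorem range_filter_notMem_range_mul_add {A B : ℕ}
    [DecidablePred (· ∈ Set.range fun r => A * r + B)] :
    (Finset.range A).filter (· ∉ Set.range fun r => A * r + B) = (Finset.range A).erase B := by
  ext k
  simp only [Finset.mem_filter, Finset.mem_range, Finset.mem_erase, Set.mem_range]
  constructor
  · rintro ⟨hk, hkM⟩
    exact ⟨fun h => hkM ⟨0, by simp [h]⟩, hk⟩
  · rintro ⟨hkB, hk⟩
    refine ⟨hk, ?_⟩
    rintro ⟨_ | r, rfl⟩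
    · simp at hkB
    · rw [Nat.mul_succ] at hk
      linarith [Nat.zero_le (A * r)]

/-- For `1 ≤ B < A` and `P` the generating function of Dyck paths whose up-run lengths all
avoid `{A·r + B : r ≥ 0}`: `P = ∑_{0 ≤ k < A, k ≠ B} z^k P^k + z^A P^(A+1)`. -/
theorem stmt9 (A B : ℕ) (hB : 1 ≤ B) (hBA : B < A) :
    let P := genFun (fun p => ∀ r : ℕ, ¬ HasUpRun p (A * r + B))
    P = (∑ k ∈ (Finset.range A).erase B, PowerSeries.X ^ k * P ^ k) +
      PowerSeries.X ^ A * P ^ (A + 1) := by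
  classical
  intro P
  have hP : P = genFun (AvoidsUpRuns (Set.range fun r => A * r + B)) :=
    congrArg genFun (funext fun p => by simp [AvoidsUpRuns])
  have h0 : 0 ∉ Set.range fun r => A * r + B := by
    rintro ⟨r, hr⟩
    simp at hr
    omega
  rw [hP, ← range_filter_notMem_range_mul_add]
  exact genFun_avoidsUpRuns_of_periodic h0 (add_mem_range_mul_add_iff hBA)
end
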